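/- arXiv:1612.01700 — 5 statements merged into one kernel-verified Lean document; each statement's English description precedes it below -/
import Mathlib

section
/- Let N ≥ 2, 1 ≤ k < N, R > 0 and b ≥ 0 with bR ≤ k. Let Ω ⊆ B_R(0) be a bounded open subset of ℝ^N and let H : Ω × ℝ^N → ℝ be continuous and satisfy (SC1) with constant b. If u : Ω → ℝ is a lower semicontinuous viscosity supersolution of 𝒫⁻ₖ(D²u) + H(x,∇u) = 0 in Ω (that is, 𝒫⁻ₖ(D²u) + H(x,∇u) ≤ 0 in the viscosity sense) and liminf_{x→∂Ω} u(x) ≥ 0, then u ≥ 0 in Ω. -/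
open Metric Filter Topology Set

/-- `𝒫⁻ₖ(D²φ(x))`: the sum of the `k` smallest eigenvalues of the Hessian of `φ` at `x`,
expressed through the min-max representation over orthonormal `k`-frames. -/
noncomputable def Pminus {N : ℕ} (k : ℕ) (φ : EuclideanSpace ℝ (Fin N) → ℝ)
    (x : EuclideanSpace ℝ (Fin N)) : ℝ :=
  sInf {s : ℝ | ∃ ξ : Fin k → EuclideanSpace ℝ (Fin N), Orthonormal ℝ ξ ∧
    s = ∑ i, iteratedFDeriv ℝ 2 φ x ![ξ i, ξ i]}

/-- `𝒫⁺ₖ(D²φ(x))`: the sum of the `k` largest eigenvalues of the Hessian of `φ` at `x`. -/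
noncomputable def Pplus {N : ℕ} (k : ℕ) (φ : EuclideanSpace ℝ (Fin N) → ℝ)
    (x : EuclideanSpace ℝ (Fin N)) : ℝ :=
  sSup {s : ℝ | ∃ ξ : Fin k → EuclideanSpace ℝ (Fin N), Orthonormal ℝ ξ ∧
    s = ∑ i, iteratedFDeriv ℝ 2 φ x ![ξ i, ξ i]}

/-- Viscosity subsolution of `P(D²u) + H(x,∇u) + μ u = f(x)` in `Ω`:
for every `x₀ ∈ Ω` and every `C²` test function `φ` such that `u - φ` has a local
maximum (relative to `Ω`) at `x₀`, one has `P(D²φ(x₀)) + H(x₀,∇φ(x₀)) + μ u(x₀) ≥ f(x₀)`. -/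
def IsViscSubsol {N : ℕ}
    (P : (EuclideanSpace ℝ (Fin N) → ℝ) → EuclideanSpace ℝ (Fin N) → ℝ)
    (Ω : Set (EuclideanSpace ℝ (Fin N)))
    (H : EuclideanSpace ℝ (Fin N) → EuclideanSpace ℝ (Fin N) → ℝ)
    (μ : ℝ) (f : EuclideanSpace ℝ (Fin N) → ℝ)
    (u : EuclideanSpace ℝ (Fin N) → ℝ) : Prop :=
  ∀ x₀ ∈ Ω, ∀ φ : EuclideanSpace ℝ (Fin N) → ℝ, ContDiffAt ℝ 2 φ x₀ →
    IsLocalMaxOn (fun x => u x - φ x) Ω x₀ →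
    f x₀ ≤ P φ x₀ + H x₀ (gradient φ x₀) + μ * u x₀

/-- Viscosity supersolution of `P(D²u) + H(x,∇u) + μ u = f(x)` in `Ω`. -/
def IsViscSupersol {N : ℕ}
    (P : (EuclideanSpace ℝ (Fin N) → ℝ) → EuclideanSpace ℝ (Fin N) → ℝ)
    (Ω : Set (EuclideanSpace ℝ (Fin N)))
    (H : EuclideanSpace ℝ (Fin N) → EuclideanSpace ℝ (Fin N) → ℝ)
    (μ : ℝ) (f : EuclideanSpace ℝ (Fin N) → ℝ)
    (u : EuclideanSpace ℝ (Fin N) → ℝ) : Prop :=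
  ∀ x₀ ∈ Ω, ∀ φ : EuclideanSpace ℝ (Fin N) → ℝ, ContDiffAt ℝ 2 φ x₀ →
    IsLocalMinOn (fun x => u x - φ x) Ω x₀ →
    P φ x₀ + H x₀ (gradient φ x₀) + μ * u x₀ ≤ f x₀

/-- Structure condition (SC1): `|H(x,ξ)| ≤ b‖ξ‖`. -/
def SC1 {N : ℕ} (Ω : Set (EuclideanSpace ℝ (Fin N)))
    (H : EuclideanSpace ℝ (Fin N) → EuclideanSpace ℝ (Fin N) → ℝ) (b : ℝ) : Prop :=
  ∀ x ∈ Ω, ∀ ξ : EuclideanSpace ℝ (Fin N), |H x ξ| ≤ b * ‖ξ‖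

/-- Structure condition (SC2): positive 1-homogeneity in the gradient variable. -/
def SC2 {N : ℕ} (Ω : Set (EuclideanSpace ℝ (Fin N)))
    (H : EuclideanSpace ℝ (Fin N) → EuclideanSpace ℝ (Fin N) → ℝ) : Prop :=
  ∀ x ∈ Ω, ∀ t : ℝ, 0 ≤ t → ∀ ξ : EuclideanSpace ℝ (Fin N), H x (t • ξ) = t * H x ξ

/-- Structure condition (SC3): uniform continuity in `x` through a modulus of continuity. -/
def SC3 {N : ℕ} (Ω : Set (EuclideanSpace ℝ (Fin N)))
    (H : EuclideanSpace ℝ (Fin N) → EuclideanSpace ℝ (Fin N) → ℝ) : Prop :=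
  ∃ ω : ℝ → ℝ, Monotone ω ∧ Filter.Tendsto ω (𝓝[>] (0 : ℝ)) (𝓝 (0 : ℝ)) ∧
    ∀ x ∈ Ω, ∀ y ∈ Ω, ∀ ξ : EuclideanSpace ℝ (Fin N),
      |H x ξ - H y ξ| ≤ ω (‖x - y‖ * (1 + ‖ξ‖))

/-- `Ω ∈ 𝒞_R`: a "hula hoop" domain, i.e. an intersection of a nonempty family of
open balls of the common radius `R`. -/
def HulaHoop {N : ℕ} (R : ℝ) (Ω : Set (EuclideanSpace ℝ (Fin N))) : Prop :=
  ∃ Y : Set (EuclideanSpace ℝ (Fin N)), Y.Nonempty ∧ Ω = ⋂ y ∈ Y, ball y R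

/-- `μ̄ₖ⁻(Ω)`: the supremum (in `EReal`) of those `μ` for which there is an upper
semicontinuous `w < 0` on `cl(Ω)` which is a viscosity subsolution of
`𝒫⁻ₖ(D²w) + H(x,∇w) + μ w = 0` in `Ω`. -/
noncomputable def muBarMinus {N : ℕ} (k : ℕ) (Ω : Set (EuclideanSpace ℝ (Fin N)))
    (H : EuclideanSpace ℝ (Fin N) → EuclideanSpace ℝ (Fin N) → ℝ) : EReal :=
  sSup {m : EReal | ∃ μ : ℝ, m = (μ : EReal) ∧ ∃ w : EuclideanSpace ℝ (Fin N) → ℝ,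
    UpperSemicontinuousOn w (closure Ω) ∧ (∀ x ∈ closure Ω, w x < 0) ∧
    IsViscSubsol (Pminus k) Ω H μ (fun _ => 0) w}

/-- `μₖ⁻(Ω)`: as `μ̄ₖ⁻(Ω)`, but only requiring `w < 0` (and upper semicontinuous) in `Ω`. -/
noncomputable def muMinus {N : ℕ} (k : ℕ) (Ω : Set (EuclideanSpace ℝ (Fin N)))
    (H : EuclideanSpace ℝ (Fin N) → EuclideanSpace ℝ (Fin N) → ℝ) : EReal :=
  sSup {m : EReal | ∃ μ : ℝ, m = (μ : EReal) ∧ ∃ w : EuclideanSpace ℝ (Fin N) → ℝ,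
    UpperSemicontinuousOn w Ω ∧ (∀ x ∈ Ω, w x < 0) ∧
    IsViscSubsol (Pminus k) Ω H μ (fun _ => 0) w}

/-- `μ̄ₖ⁺(Ω)`: the supremum (in `EReal`) of those `μ` for which there is a lower
semicontinuous `w > 0` on `cl(Ω)` which is a viscosity supersolution of
`𝒫⁻ₖ(D²w) + H(x,∇w) + μ w = 0` in `Ω`. -/
noncomputable def muBarPlus {N : ℕ} (k : ℕ) (Ω : Set (EuclideanSpace ℝ (Fin N)))
    (H : EuclideanSpace ℝ (Fin N) → EuclideanSpace ℝ (Fin N) → ℝ) : EReal :=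
  sSup {m : EReal | ∃ μ : ℝ, m = (μ : EReal) ∧ ∃ w : EuclideanSpace ℝ (Fin N) → ℝ,
    LowerSemicontinuousOn w (closure Ω) ∧ (∀ x ∈ closure Ω, 0 < w x) ∧
    IsViscSupersol (Pminus k) Ω H μ (fun _ => 0) w}

/-- `μₖ⁺(Ω)`: as `μ̄ₖ⁺(Ω)`, but only requiring `w > 0` (and lower semicontinuous) in `Ω`. -/
noncomputable def muPlus {N : ℕ} (k : ℕ) (Ω : Set (EuclideanSpace ℝ (Fin N)))
    (H : EuclideanSpace ℝ (Fin N) → EuclideanSpace ℝ (Fin N) → ℝ) : EReal :=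
  sSup {m : EReal | ∃ μ : ℝ, m = (μ : EReal) ∧ ∃ w : EuclideanSpace ℝ (Fin N) → ℝ,
    LowerSemicontinuousOn w Ω ∧ (∀ x ∈ Ω, 0 < w x) ∧
    IsViscSupersol (Pminus k) Ω H μ (fun _ => 0) w}

/-!
If `u` took a negative value at `x₀`, then for `c = -u(x₀) / (2R²)` the function `u - c‖x‖²`
would, by lower semicontinuity and the boundary condition `liminf u ≥ 0 > u(x₀) / 2`, attain its
minimum over `Ω` at an interior point `x₁`. The paraboloid `c‖x‖²` thus touches `u` from below at
`x₁`, but it is a strict subsolution: `𝒫⁻ₖ(D²(c‖x‖²)) = 2ck`, while (SC1) gives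
`|H(x₁, 2c x₁)| ≤ 2cb‖x₁‖ < 2ck` because `bR ≤ k`. This contradicts the supersolution inequality.
-/

theorem LowerSemicontinuousOn.exists_isMinOn_of_frontier {α : Type*} [TopologicalSpace α]
    {Ω : Set α} (hΩ : IsOpen Ω) (hΩc : IsCompact (closure Ω)) {v : α → ℝ}
    (hv : LowerSemicontinuousOn v Ω) {x₀ : α} (hx₀ : x₀ ∈ Ω)
    (hfr : ∀ z ∈ frontier Ω, ∀ᶠ x in 𝓝[Ω] z, v x₀ < v x) :
    ∃ x₁ ∈ Ω, IsMinOn v Ω x₁ := by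
  have hSΩ : {y ∈ Ω | v y ≤ v x₀} ⊆ Ω := fun y hy => hy.1
  have hS : IsClosed {y ∈ Ω | v y ≤ v x₀} := by
    refine isClosed_of_closure_subset fun z hz => ?_
    by_contra hzS
    have hlarge : ∀ᶠ x in 𝓝[Ω] z, v x₀ < v x := by
      by_cases hzΩ : z ∈ Ω
      · have hz_gt : v x₀ < v z := not_le.1 fun h => hzS ⟨hzΩ, h⟩
        exact hv z hzΩ _ hz_gt
      · exact hfr z ⟨closure_mono hSΩ hz, by rwa [hΩ.interior_eq]⟩
    have := mem_closure_iff_nhdsWithin_neBot.1 hz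
    obtain ⟨y, hy, hyS⟩ :=
      ((hlarge.filter_mono (nhdsWithin_mono z hSΩ)).and self_mem_nhdsWithin).exists
    exact hyS.2.not_gt hy
  have hne : {y ∈ Ω | v y ≤ v x₀}.Nonempty := ⟨x₀, hx₀, le_rfl⟩
  obtain ⟨x₁, hx₁, hmin⟩ :=
    (hv.mono hSΩ).exists_isMinOn hne (hΩc.of_isClosed_subset hS (hSΩ.trans subset_closure))
  refine ⟨x₁, hx₁.1, fun y hy => ?_⟩
  by_cases hyS : v y ≤ v x₀
  · exact hmin ⟨hy, hyS⟩
  · exact (hmin ⟨hx₀, le_rfl⟩).trans (not_le.1 hyS).le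

open scoped RealInnerProductSpace

section NormSq

variable {E : Type*} [NormedAddCommGroup E] [InnerProductSpace ℝ E]

theorem hasFDerivAt_const_mul_norm_sq (c : ℝ) (x : E) :
    HasFDerivAt (fun y : E => c * ‖y‖ ^ 2) ((2 * c) • innerSL ℝ x) x := by
  refine ((hasStrictFDerivAt_norm_sq x).hasFDerivAt.const_mul c).congr_fderiv ?_
  ext y
  simp [two_smul]
  ring

theorem fderiv_const_mul_norm_sq (c : ℝ) :
    fderiv ℝ (fun y : E => c * ‖y‖ ^ 2) = (2 * c) • innerSL ℝ := by
  ext1 x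
  exact (hasFDerivAt_const_mul_norm_sq c x).fderiv

theorem iteratedFDeriv_two_const_mul_norm_sq (c : ℝ) (x ξ : E) :
    iteratedFDeriv ℝ 2 (fun y : E => c * ‖y‖ ^ 2) x ![ξ, ξ] = 2 * c * ‖ξ‖ ^ 2 := by
  rw [iteratedFDeriv_two_apply, fderiv_const_mul_norm_sq, ContinuousLinearMap.fderiv]
  simp only [Matrix.cons_val_zero, Matrix.cons_val_one]
  change 2 * c * ⟪ξ, ξ⟫ = _
  rw [real_inner_self_eq_norm_sq]

theorem gradient_const_mul_norm_sq [CompleteSpace E] (c : ℝ) (x : E) :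
    gradient (fun y : E => c * ‖y‖ ^ 2) x = (2 * c) • x := by
  refine HasGradientAt.gradient ?_
  rw [hasGradientAt_iff_hasFDerivAt]
  refine (hasFDerivAt_const_mul_norm_sq c x).congr_fderiv ?_
  ext y
  simp

end NormSq

theorem Pminus_const_mul_norm_sq {N k : ℕ} (hkN : k ≤ N) (c : ℝ)
    (x : EuclideanSpace ℝ (Fin N)) :
    Pminus k (fun y => c * ‖y‖ ^ 2) x = 2 * c * k := by
  have hframe : ∀ ξ : Fin k → EuclideanSpace ℝ (Fin N), Orthonormal ℝ ξ →
      ∑ i, iteratedFDeriv ℝ 2 (fun y => c * ‖y‖ ^ 2) x ![ξ i, ξ i] = 2 * c * k := by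
    intro ξ hξ
    simp [iteratedFDeriv_two_const_mul_norm_sq, hξ.1, mul_comm]
  have hstd : Orthonormal ℝ (EuclideanSpace.basisFun (Fin N) ℝ ∘ Fin.castLE hkN) :=
    (EuclideanSpace.basisFun (Fin N) ℝ).orthonormal.comp _ (Fin.castLE_injective hkN)
  rw [Pminus, ← csInf_singleton (2 * c * (k : ℝ))]
  congr 1
  ext s
  constructor
  · rintro ⟨ξ, hξ, rfl⟩
    exact hframe ξ hξ
  · rintro rfl
    exact ⟨_, hstd, (hframe _ hstd).symm⟩

theorem Pminus_add_H_const_mul_norm_sq_pos {N k : ℕ} (hk1 : 1 ≤ k) (hkN : k ≤ N) {R b c : ℝ}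
    (hbR : b * R ≤ k) (hc : 0 < c) {Ω : Set (EuclideanSpace ℝ (Fin N))}
    (hΩsub : Ω ⊆ ball 0 R) {H : EuclideanSpace ℝ (Fin N) → EuclideanSpace ℝ (Fin N) → ℝ}
    (hSC1 : SC1 Ω H b) {x : EuclideanSpace ℝ (Fin N)} (hx : x ∈ Ω) :
    0 < Pminus k (fun y => c * ‖y‖ ^ 2) x + H x (gradient (fun y => c * ‖y‖ ^ 2) x) := by
  rw [Pminus_const_mul_norm_sq hkN, gradient_const_mul_norm_sq]
  have hxR : ‖x‖ < R := mem_ball_zero_iff.1 (hΩsub hx)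
  have hH : -(b * (2 * c * ‖x‖)) ≤ H x ((2 * c) • x) := by
    have h := hSC1 x hx ((2 * c) • x)
    rw [norm_smul, Real.norm_of_nonneg (by positivity)] at h
    exact neg_le_of_abs_le h
  have hbx : b * ‖x‖ < k := by
    rcases le_or_gt b 0 with hb | hb
    · have : (1 : ℝ) ≤ k := by exact_mod_cast hk1
      nlinarith [norm_nonneg x]
    · exact (mul_lt_mul_of_pos_left hxR hb).trans_le hbR
  nlinarith [mul_pos hc (sub_pos.2 hbx)]

theorem statement0_general {N : ℕ} (k : ℕ) (hk1 : 1 ≤ k) (hkN : k < N)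
    (R b : ℝ) (hbR : b * R ≤ (k : ℝ))
    (Ω : Set (EuclideanSpace ℝ (Fin N))) (hΩopen : IsOpen Ω)
    (hΩsub : Ω ⊆ ball (0 : EuclideanSpace ℝ (Fin N)) R)
    (H : EuclideanSpace ℝ (Fin N) → EuclideanSpace ℝ (Fin N) → ℝ)
    (hSC1 : SC1 Ω H b)
    (u : EuclideanSpace ℝ (Fin N) → ℝ)
    (hu : LowerSemicontinuousOn u Ω)
    (hsuper : IsViscSupersol (Pminus k) Ω H 0 (fun _ => 0) u)
    (hbdry : ∀ z ∈ frontier Ω, ∀ ε > 0, ∀ᶠ x in 𝓝[Ω] z, -ε < u x) :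
    ∀ x ∈ Ω, 0 ≤ u x := by
  by_contra! ⟨x₀, hx₀, hux₀⟩
  have hR : 0 < R := (norm_nonneg x₀).trans_lt (mem_ball_zero_iff.1 (hΩsub hx₀))
  set c := -u x₀ / (2 * R ^ 2)
  have hc : 0 < c := div_pos (neg_pos.2 hux₀) (by positivity)
  have hcR : c * R ^ 2 = -u x₀ / 2 := by
    simp only [c]
    field_simp
  set v := fun x => u x - c * ‖x‖ ^ 2
  have hv : LowerSemicontinuousOn v Ω := by
    have hφ : Continuous fun x : EuclideanSpace ℝ (Fin N) => -(c * ‖x‖ ^ 2) := by fun_prop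
    simp only [v, sub_eq_add_neg]
    exact hu.add (hφ.lowerSemicontinuous.lowerSemicontinuousOn Ω)
  have hΩc : IsCompact (closure Ω) := (isCompact_closedBall 0 R).of_isClosed_subset
    isClosed_closure (closure_minimal (hΩsub.trans ball_subset_closedBall) isClosed_closedBall)
  have hfr : ∀ z ∈ frontier Ω, ∀ᶠ x in 𝓝[Ω] z, v x₀ < v x := by
    intro z hz
    filter_upwards [hbdry z hz (-u x₀ / 2) (by linarith), self_mem_nhdsWithin] with x hux hx
    have hxR : ‖x‖ ^ 2 < R ^ 2 :=
      pow_lt_pow_left₀ (mem_ball_zero_iff.1 (hΩsub hx)) (norm_nonneg x) two_ne_zero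
    have hφx₀ : 0 ≤ c * ‖x₀‖ ^ 2 := by positivity
    nlinarith [mul_lt_mul_of_pos_left hxR hc]
  obtain ⟨x₁, hx₁, hmin⟩ := hv.exists_isMinOn_of_frontier hΩopen hΩc hx₀ hfr
  have hle := hsuper x₁ hx₁ _ (contDiff_const.mul (contDiff_norm_sq ℝ)).contDiffAt hmin.localize
  have hpos := Pminus_add_H_const_mul_norm_sq_pos hk1 hkN.le hbR hc hΩsub hSC1 hx₁
  simp only [zero_mul, add_zero] at hle
  linarith

/-- weak minimum principle for `𝒫⁻ₖ(D²u) + H(x,∇u)` in `Ω ⊆ B_R(0)`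
when `bR ≤ k`. -/
theorem statement0 {N : ℕ} (hN : 2 ≤ N) (k : ℕ) (hk1 : 1 ≤ k) (hkN : k < N)
    (R b : ℝ) (hR : 0 < R) (hb : 0 ≤ b) (hbR : b * R ≤ (k : ℝ))
    (Ω : Set (EuclideanSpace ℝ (Fin N))) (hΩopen : IsOpen Ω)
    (hΩsub : Ω ⊆ ball (0 : EuclideanSpace ℝ (Fin N)) R)
    (H : EuclideanSpace ℝ (Fin N) → EuclideanSpace ℝ (Fin N) → ℝ)
    (hHcont : ContinuousOn (Function.uncurry H)
      (Ω ×ˢ (univ : Set (EuclideanSpace ℝ (Fin N)))))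
    (hSC1 : SC1 Ω H b)
    (u : EuclideanSpace ℝ (Fin N) → ℝ)
    (hu : LowerSemicontinuousOn u Ω)
    (hsuper : IsViscSupersol (Pminus k) Ω H 0 (fun _ => 0) u)
    (hbdry : ∀ z ∈ frontier Ω, ∀ ε > 0, ∀ᶠ x in 𝓝[Ω] z, -ε < u x) :
    ∀ x ∈ Ω, 0 ≤ u x :=
  statement0_general k hk1 hkN R b hbR Ω hΩopen hΩsub H hSC1 u hu hsuper hbdry
end

section
/- Let N ≥ 2, 1 ≤ k < N, R > 0, b ≥ 0 with bR ≤ k, and γ > 1. The function w(x) = (R² − |x|²)^γ on the closed ball cl(B_R(0)) ⊂ ℝ^N is C² in B_R(0), satisfies w > 0 in B_R(0), w = 0 and ∇w = 0 on ∂B_R(0), and satisfies the pointwise inequality 𝒫⁻ₖ(D²w(x)) + b|∇w(x)| ≤ 0 for every x ∈ B_R(0). In particular, the Hopf lemma fails for the operator 𝒫⁻ₖ(D²·) + b|∇·|: there is a positive classical supersolution in B_R(0) vanishing on ∂B_R(0) together with its gradient. -/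
open Metric Filter Topology Set

/-!
Write `w(x) = (R² - ‖x‖²)^γ` and `t = R² - ‖x‖²`. Then `∇w(x) = -2γ t^(γ-1) x` and
`D²w(x)(ξ, ξ) = 4γ(γ-1) t^(γ-2) ⟪x, ξ⟫² - 2γ t^(γ-1) ‖ξ‖²`; since `γ > 1` the gradient vanishes
on the sphere. Inside the ball, as `k < N` there are `k` orthonormal directions orthogonal to `x`,
and along each the Hessian equals `-2γ t^(γ-1)`. Hence `𝒫⁻ₖ(D²w(x)) ≤ -2kγ t^(γ-1)`, while
`b‖∇w(x)‖ = 2γ t^(γ-1) b‖x‖ ≤ 2γ t^(γ-1) bR ≤ 2kγ t^(γ-1)`.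
-/

open Module

theorem exists_orthonormal_forall_inner_eq_zero {E : Type*} [NormedAddCommGroup E]
    [InnerProductSpace ℝ E] [FiniteDimensional ℝ E] {k : ℕ} (hk : k < finrank ℝ E) (x : E) :
    ∃ ξ : Fin k → E, Orthonormal ℝ ξ ∧ ∀ i, inner ℝ x (ξ i) = 0 := by
  set K := (ℝ ∙ x)ᗮ
  have hK : k ≤ finrank ℝ K := by
    have := K.finrank_add_finrank_orthogonal
    have := finrank_span_le_card (R := ℝ) ({x} : Set E)
    simp only [Set.toFinset_singleton, Finset.card_singleton] at this
    rw [Submodule.orthogonal_orthogonal] at *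
    omega
  let b := stdOrthonormalBasis ℝ K
  refine ⟨fun i => b (Fin.castLE hK i), ?_, fun i => ?_⟩
  · exact (b.orthonormal.comp _ (Fin.castLE_injective hK)).comp_linearIsometry K.subtypeₗᵢ
  · exact Submodule.inner_right_of_mem_orthogonal (Submodule.mem_span_singleton_self x)
      (b (Fin.castLE hK i)).2

theorem Pminus_le_sum_of_orthonormal {N k : ℕ} (φ : EuclideanSpace ℝ (Fin N) → ℝ)
    (x : EuclideanSpace ℝ (Fin N)) {ξ : Fin k → EuclideanSpace ℝ (Fin N)}
    (hξ : Orthonormal ℝ ξ) :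
    Pminus k φ x ≤ ∑ i, iteratedFDeriv ℝ 2 φ x ![ξ i, ξ i] := by
  set S := iteratedFDeriv ℝ 2 φ x
  have hbdd : BddBelow {s : ℝ | ∃ η : Fin k → EuclideanSpace ℝ (Fin N), Orthonormal ℝ η ∧
      s = ∑ i, S ![η i, η i]} := by
    refine ⟨-(k * ‖S‖), ?_⟩
    rintro _ ⟨η, hη, rfl⟩
    have hterm : ∀ i, -‖S‖ ≤ S ![η i, η i] := fun i => by
      have := S.le_opNorm ![η i, η i]
      simp only [Fin.prod_univ_two, Matrix.cons_val_zero, Matrix.cons_val_one, hη.1 i,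
        mul_one, Real.norm_eq_abs] at this
      exact neg_le_of_abs_le this
    simpa using Finset.sum_le_sum (s := Finset.univ) fun i _ => hterm i
  exact csInf_le hbdd ⟨ξ, hξ, rfl⟩

theorem sq_sub_norm_sq_pos_of_mem_ball {E : Type*} [SeminormedAddCommGroup E] {R : ℝ} {x : E}
    (hx : x ∈ ball (0 : E) R) : 0 < R ^ 2 - ‖x‖ ^ 2 := by
  have := mem_ball_zero_iff.1 hx
  nlinarith [norm_nonneg x]

section RadialPower

variable {E : Type*} [NormedAddCommGroup E] [InnerProductSpace ℝ E] {R γ : ℝ}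

theorem contDiffAt_sq_sub_norm_sq_rpow {n : WithTop ℕ∞} {x : E} (hx : R ^ 2 - ‖x‖ ^ 2 ≠ 0) :
    ContDiffAt ℝ n (fun y : E => (R ^ 2 - ‖y‖ ^ 2) ^ γ) x :=
  (Real.contDiffAt_rpow_const_of_ne hx).comp x
    (contDiffAt_const.sub (contDiff_norm_sq ℝ).contDiffAt)

theorem hasFDerivAt_sq_sub_norm_sq_rpow (hγ : 1 ≤ γ) (x : E) :
    HasFDerivAt (fun y : E => (R ^ 2 - ‖y‖ ^ 2) ^ γ)
      ((-(2 * γ) * (R ^ 2 - ‖x‖ ^ 2) ^ (γ - 1)) • innerSL ℝ x) x := by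
  refine ((Real.hasDerivAt_rpow_const (Or.inr hγ)).comp_hasFDerivAt x
    ((hasStrictFDerivAt_norm_sq x).hasFDerivAt.const_sub (R ^ 2))).congr_fderiv ?_
  ext v
  simp only [smul_neg, neg_apply, smul_apply, coe_innerSL_apply, nsmul_eq_mul, Nat.cast_ofNat,
    smul_eq_mul, neg_mul, neg_smul, neg_inj]
  ring

theorem hasGradientAt_sq_sub_norm_sq_rpow [CompleteSpace E] (hγ : 1 ≤ γ) (x : E) :
    HasGradientAt (fun y : E => (R ^ 2 - ‖y‖ ^ 2) ^ γ)
      ((-(2 * γ) * (R ^ 2 - ‖x‖ ^ 2) ^ (γ - 1)) • x) x := by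
  rw [hasGradientAt_iff_hasFDerivAt]
  refine (hasFDerivAt_sq_sub_norm_sq_rpow hγ x).congr_fderiv ?_
  ext v
  simp

theorem iteratedFDeriv_two_sq_sub_norm_sq_rpow (hγ : 1 ≤ γ) {x : E}
    (hx : R ^ 2 - ‖x‖ ^ 2 ≠ 0) (ξ : E) :
    iteratedFDeriv ℝ 2 (fun y : E => (R ^ 2 - ‖y‖ ^ 2) ^ γ) x ![ξ, ξ] =
      4 * γ * (γ - 1) * (R ^ 2 - ‖x‖ ^ 2) ^ (γ - 2) * inner ℝ x ξ ^ 2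
        - 2 * γ * (R ^ 2 - ‖x‖ ^ 2) ^ (γ - 1) * ‖ξ‖ ^ 2 := by
  have hfderiv : fderiv ℝ (fun y : E => (R ^ 2 - ‖y‖ ^ 2) ^ γ) =
      fun y => (-(2 * γ) * (R ^ 2 - ‖y‖ ^ 2) ^ (γ - 1)) • innerSL ℝ y :=
    funext fun y => (hasFDerivAt_sq_sub_norm_sq_rpow hγ y).fderiv
  have hcoeff : HasFDerivAt (fun y : E => -(2 * γ) * (R ^ 2 - ‖y‖ ^ 2) ^ (γ - 1))
      ((4 * γ * (γ - 1) * (R ^ 2 - ‖x‖ ^ 2) ^ (γ - 2)) • innerSL ℝ x) x := by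
    refine (((Real.hasDerivAt_rpow_const (Or.inl hx)).comp_hasFDerivAt x
      ((hasStrictFDerivAt_norm_sq x).hasFDerivAt.const_sub (R ^ 2))).const_mul
        (-(2 * γ))).congr_fderiv ?_
    ext v
    simp only [smul_neg, neg_smul, neg_neg, smul_apply, coe_innerSL_apply, nsmul_eq_mul,
      Nat.cast_ofNat, smul_eq_mul]
    rw [show γ - 1 - 1 = γ - 2 by ring]
    ring
  have hsecond : HasFDerivAt
      (fun y : E => (-(2 * γ) * (R ^ 2 - ‖y‖ ^ 2) ^ (γ - 1)) • innerSL ℝ y) _ x :=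
    hcoeff.smul (innerSL ℝ).hasFDerivAt
  rw [iteratedFDeriv_two_apply, hfderiv, hsecond.fderiv]
  simp only [Matrix.cons_val_zero, Matrix.cons_val_one, add_apply, smul_apply,
    ContinuousLinearMap.smulRight_apply, innerSL_apply_apply, smul_eq_mul]
  rw [innerSL_apply_apply, real_inner_self_eq_norm_sq]
  ring

theorem iteratedFDeriv_two_sq_sub_norm_sq_rpow_of_inner_eq_zero (hγ : 1 ≤ γ) {x : E}
    (hx : R ^ 2 - ‖x‖ ^ 2 ≠ 0) {ξ : E} (hxξ : inner ℝ x ξ = 0) (hξ : ‖ξ‖ = 1) :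
    iteratedFDeriv ℝ 2 (fun y : E => (R ^ 2 - ‖y‖ ^ 2) ^ γ) x ![ξ, ξ] =
      -(2 * γ * (R ^ 2 - ‖x‖ ^ 2) ^ (γ - 1)) := by
  rw [iteratedFDeriv_two_sq_sub_norm_sq_rpow hγ hx, hxξ, hξ]
  ring

end RadialPower

theorem Pminus_sq_sub_norm_sq_rpow_add_mul_norm_gradient_nonpos {N k : ℕ} (hkN : k < N)
    {R b γ : ℝ} (hb : 0 ≤ b) (hbR : b * R ≤ k) (hγ : 1 ≤ γ) {x : EuclideanSpace ℝ (Fin N)}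
    (hx : x ∈ ball 0 R) :
    Pminus k (fun y : EuclideanSpace ℝ (Fin N) => (R ^ 2 - ‖y‖ ^ 2) ^ γ) x
      + b * ‖gradient (fun y : EuclideanSpace ℝ (Fin N) => (R ^ 2 - ‖y‖ ^ 2) ^ γ) x‖ ≤ 0 := by
  have ht := sq_sub_norm_sq_pos_of_mem_ball hx
  set c := 2 * γ * (R ^ 2 - ‖x‖ ^ 2) ^ (γ - 1)
  have hc : 0 ≤ c := by positivity
  obtain ⟨ξ, hξ, hxξ⟩ :=
    exists_orthonormal_forall_inner_eq_zero (by rwa [finrank_euclideanSpace_fin]) x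
  have hPminus : Pminus k (fun y : EuclideanSpace ℝ (Fin N) => (R ^ 2 - ‖y‖ ^ 2) ^ γ) x
      ≤ -(k * c) := by
    refine (Pminus_le_sum_of_orthonormal _ x hξ).trans_eq ?_
    simp [iteratedFDeriv_two_sq_sub_norm_sq_rpow_of_inner_eq_zero hγ ht.ne' (hxξ _) (hξ.1 _), c]
  have hgrad : ‖gradient (fun y : EuclideanSpace ℝ (Fin N) => (R ^ 2 - ‖y‖ ^ 2) ^ γ) x‖
      = c * ‖x‖ := by
    rw [(hasGradientAt_sq_sub_norm_sq_rpow hγ x).gradient, norm_smul, Real.norm_eq_abs,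
      neg_mul, abs_neg, abs_of_nonneg hc]
  have hbx : b * ‖x‖ ≤ k := (mul_le_mul_of_nonneg_left (mem_ball_zero_iff.1 hx).le hb).trans hbR
  calc _ ≤ -(k * c) + b * (c * ‖x‖) := by rw [hgrad]; gcongr
    _ = c * (b * ‖x‖ - k) := by ring
    _ ≤ 0 := mul_nonpos_of_nonneg_of_nonpos hc (sub_nonpos.2 hbx)

theorem statement1_general {N : ℕ} (k : ℕ) (hkN : k < N)
    (R b γ : ℝ) (hb : 0 ≤ b) (hbR : b * R ≤ (k : ℝ)) (hγ : 1 < γ) :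
    ContDiffOn ℝ 2 (fun x : EuclideanSpace ℝ (Fin N) => (R ^ 2 - ‖x‖ ^ 2) ^ γ)
      (ball (0 : EuclideanSpace ℝ (Fin N)) R) ∧
    (∀ x ∈ ball (0 : EuclideanSpace ℝ (Fin N)) R, (0 : ℝ) < (R ^ 2 - ‖x‖ ^ 2) ^ γ) ∧
    (∀ x ∈ sphere (0 : EuclideanSpace ℝ (Fin N)) R,
      ((R ^ 2 - ‖x‖ ^ 2) ^ γ : ℝ) = 0 ∧
      HasGradientAt (fun x : EuclideanSpace ℝ (Fin N) => (R ^ 2 - ‖x‖ ^ 2) ^ γ) 0 x) ∧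
    (∀ x ∈ ball (0 : EuclideanSpace ℝ (Fin N)) R,
      Pminus k (fun x : EuclideanSpace ℝ (Fin N) => (R ^ 2 - ‖x‖ ^ 2) ^ γ) x
        + b * ‖gradient (fun x : EuclideanSpace ℝ (Fin N) => (R ^ 2 - ‖x‖ ^ 2) ^ γ) x‖
        ≤ 0) := by
  refine ⟨fun x hx => ?_, fun x hx => ?_, fun x hx => ?_, fun x hx => ?_⟩
  · exact (contDiffAt_sq_sub_norm_sq_rpow (sq_sub_norm_sq_pos_of_mem_ball hx).ne').contDiffWithinAt
  · exact Real.rpow_pos_of_pos (sq_sub_norm_sq_pos_of_mem_ball hx) γ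
  · have ht : R ^ 2 - ‖x‖ ^ 2 = 0 := by rw [mem_sphere_zero_iff_norm.1 hx, sub_self]
    have hgrad := hasGradientAt_sq_sub_norm_sq_rpow (R := R) hγ.le x
    rw [ht, Real.zero_rpow (by linarith), mul_zero, zero_smul] at hgrad
    exact ⟨by rw [ht, Real.zero_rpow (by linarith)], hgrad⟩
  · exact Pminus_sq_sub_norm_sq_rpow_add_mul_norm_gradient_nonpos hkN hb hbR hγ.le hx

/-- the function `w(x) = (R² - |x|²)^γ`, `γ > 1`, is a positive classical
supersolution of `𝒫⁻ₖ(D²w) + b|∇w| = 0` in `B_R(0)` vanishing on `∂B_R(0)` together with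
its gradient; in particular the Hopf lemma fails for `𝒫⁻ₖ(D²·) + b|∇·|`. -/
theorem statement1 {N : ℕ} (hN : 2 ≤ N) (k : ℕ) (hk1 : 1 ≤ k) (hkN : k < N)
    (R b γ : ℝ) (hR : 0 < R) (hb : 0 ≤ b) (hbR : b * R ≤ (k : ℝ)) (hγ : 1 < γ) :
    ContDiffOn ℝ 2 (fun x : EuclideanSpace ℝ (Fin N) => (R ^ 2 - ‖x‖ ^ 2) ^ γ)
      (ball (0 : EuclideanSpace ℝ (Fin N)) R) ∧
    (∀ x ∈ ball (0 : EuclideanSpace ℝ (Fin N)) R, (0 : ℝ) < (R ^ 2 - ‖x‖ ^ 2) ^ γ) ∧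
    (∀ x ∈ sphere (0 : EuclideanSpace ℝ (Fin N)) R,
      ((R ^ 2 - ‖x‖ ^ 2) ^ γ : ℝ) = 0 ∧
      HasGradientAt (fun x : EuclideanSpace ℝ (Fin N) => (R ^ 2 - ‖x‖ ^ 2) ^ γ) 0 x) ∧
    (∀ x ∈ ball (0 : EuclideanSpace ℝ (Fin N)) R,
      Pminus k (fun x : EuclideanSpace ℝ (Fin N) => (R ^ 2 - ‖x‖ ^ 2) ^ γ) x
        + b * ‖gradient (fun x : EuclideanSpace ℝ (Fin N) => (R ^ 2 - ‖x‖ ^ 2) ^ γ) x‖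
        ≤ 0) :=
  statement1_general k hkN R b γ hb hbR hγ
end

section
/- Let N ≥ 2, let Ω ⊂ ℝ^N be a bounded open set, let H : Ω × ℝ^N → ℝ be continuous and satisfy (SC1) with constant b, and let m > 0. Suppose u : cl(Ω) → ℝ is bounded, upper semicontinuous, satisfies u ≤ 0 on ∂Ω, and is a viscosity subsolution of 𝒫⁻₁(D²u) + H(x,∇u) = −m in Ω (that is, 𝒫⁻₁(D²u) + H(x,∇u) ≥ −m in the viscosity sense). Then for every γ ∈ (0,1) there exists a constant C, depending only on γ, b, m and sup_Ω u⁺, such that u(x) ≤ C d(x)^γ for all x ∈ cl(Ω). -/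
open Metric Filter Topology Set

/-!
Near a boundary point `y`, the function `ψ z = C ‖z - y‖ ^ γ` is a strict supersolution:
in the radial direction its Hessian is `C γ (γ - 1) r ^ (γ - 2)`, which for
`r ≤ r₀ = (1 - γ) / (2 (b + 1))` beats the first-order term `b ‖∇ψ‖ = b C γ r ^ (γ - 1)`, and
for `C` large it lies below `-m`. If moreover `C r₀ ^ γ ≥ sup u`, then `u ≤ ψ` on the boundary of
`Ω ∩ B(y, r₀)`, and a maximum of `u - ψ` inside would make `ψ` an admissible test function, so
`u ≤ ψ` there. Far from `∂Ω` one simply has `u ≤ sup u ≤ C r₀ ^ γ ≤ C d ^ γ`.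
-/

theorem iteratedFDeriv_two_apply_self_eq_deriv_deriv {𝕜 E F : Type*} [NontriviallyNormedField 𝕜]
    [NormedAddCommGroup E] [NormedSpace 𝕜 E] [NormedAddCommGroup F] [NormedSpace 𝕜 F]
    {f : E → F} {x : E} (hf : ContDiffAt 𝕜 2 f x) (v : E) :
    iteratedFDeriv 𝕜 2 f x ![v, v] = deriv (deriv fun t : 𝕜 => f (x + t • v)) 0 := by
  have hline (t : 𝕜) : HasDerivAt (fun s : 𝕜 => x + s • v) v t := by
    simpa using ((hasDerivAt_id t).smul_const v).const_add x
  have hx : Tendsto (fun t : 𝕜 => x + t • v) (𝓝 0) (𝓝 x) := by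
    simpa using (hline 0).continuousAt.tendsto
  have hderiv :
      deriv (fun t => f (x + t • v)) =ᶠ[𝓝 (0 : 𝕜)] fun t => fderiv 𝕜 f (x + t • v) v := by
    filter_upwards [hx.eventually (hf.eventually (by simp))] with t ht
    exact ((ht.differentiableAt (by simp)).hasFDerivAt.comp_hasDerivAt t (hline t)).deriv
  have hf' : DifferentiableAt 𝕜 (fderiv 𝕜 f) (x + (0 : 𝕜) • v) := by
    simpa using (hf.fderiv_right (m := 1) le_rfl).differentiableAt one_ne_zero
  rw [hderiv.deriv_eq, iteratedFDeriv_two_apply]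
  have h1 : HasDerivAt (fun t => fderiv 𝕜 f (x + t • v))
      (fderiv 𝕜 (fderiv 𝕜 f) (x + (0 : 𝕜) • v) v) (0 : 𝕜) :=
    hf'.hasFDerivAt.comp_hasDerivAt (0 : 𝕜) (hline 0)
  have h2 := h1.clm_apply (hasDerivAt_const (0 : 𝕜) v)
  simpa using h2.deriv.symm

theorem deriv_deriv_mul_abs_add_rpow {r : ℝ} (hr : 0 < r) (C γ : ℝ) :
    deriv (deriv fun t => C * |r + t| ^ γ) 0 = C * γ * (γ - 1) * r ^ (γ - 2) := by
  have hpos : ∀ᶠ t in 𝓝 (0 : ℝ), 0 < r + t :=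
    (continuous_const.add continuous_id).continuousAt.eventually (lt_mem_nhds (by simpa using hr))
  have hderiv : deriv (fun t => C * |r + t| ^ γ) =ᶠ[𝓝 0] fun t => C * γ * (r + t) ^ (γ - 1) := by
    filter_upwards [hpos.eventually_nhds] with t ht
    have habs : (fun t => C * |r + t| ^ γ) =ᶠ[𝓝 t] fun t => C * (r + t) ^ γ := by
      filter_upwards [ht] with s hs
      rw [abs_of_pos hs]
    rw [habs.deriv_eq, (((hasDerivAt_id' t).const_add r).rpow_const
      (Or.inl ht.self_of_nhds.ne')).const_mul C |>.deriv]
    ring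
  rw [hderiv.deriv_eq, (((hasDerivAt_id' 0).const_add r).rpow_const
    (Or.inl (by simpa using hr.ne'))).const_mul (C * γ) |>.deriv]
  ring_nf

section InnerProductSpace

variable {E : Type*} [NormedAddCommGroup E] [InnerProductSpace ℝ E]

theorem contDiffAt_mul_norm_sub_rpow {x y : E} (hxy : x ≠ y) (C γ : ℝ) {n : WithTop ℕ∞} :
    ContDiffAt ℝ n (fun z => C * ‖z - y‖ ^ γ) x :=
  contDiffAt_const.mul <| ((contDiffAt_norm ℝ (sub_ne_zero.2 hxy)).comp x
    (contDiffAt_id.sub contDiffAt_const)).rpow_const_of_ne (by simpa [sub_eq_zero] using hxy)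

theorem iteratedFDeriv_two_mul_norm_sub_rpow {x y : E} (hxy : x ≠ y) (C γ : ℝ) :
    iteratedFDeriv ℝ 2 (fun z => C * ‖z - y‖ ^ γ) x
        ![‖x - y‖⁻¹ • (x - y), ‖x - y‖⁻¹ • (x - y)] =
      C * γ * (γ - 1) * ‖x - y‖ ^ (γ - 2) := by
  have hr : 0 < ‖x - y‖ := norm_pos_iff.2 (sub_ne_zero.2 hxy)
  rw [iteratedFDeriv_two_apply_self_eq_deriv_deriv (contDiffAt_mul_norm_sub_rpow hxy C γ),
    ← deriv_deriv_mul_abs_add_rpow hr]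
  congr! 2
  ext t
  have hline : x + t • (‖x - y‖⁻¹ • (x - y)) - y = ((‖x - y‖ + t) * ‖x - y‖⁻¹) • (x - y) := by
    rw [add_mul, mul_inv_cancel₀ hr.ne', add_smul, one_smul, smul_smul]
    abel
  rw [hline, norm_smul, Real.norm_eq_abs, abs_mul, abs_inv, abs_of_pos hr,
    inv_mul_cancel_right₀ hr.ne']

theorem norm_fderiv_mul_norm_sub_rpow_le {x y : E} (hxy : x ≠ y) {C γ : ℝ} (hC : 0 ≤ C)
    (hγ : 0 ≤ γ) :
    ‖fderiv ℝ (fun z => C * ‖z - y‖ ^ γ) x‖ ≤ C * γ * ‖x - y‖ ^ (γ - 1) := by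
  have hnorm : DifferentiableAt ℝ (fun z => ‖z - y‖) x :=
    (differentiableAt_id.sub_const y).norm ℝ (sub_ne_zero.2 hxy)
  have hlip : ‖fderiv ℝ (fun z => ‖z - y‖) x‖ ≤ 1 := by
    simpa [dist_eq_norm] using
      norm_fderiv_le_of_lipschitz ℝ (x₀ := x) (LipschitzWith.dist_left y)
  rw [((hnorm.hasFDerivAt.rpow_const (p := γ)
    (Or.inl (norm_pos_iff.2 (sub_ne_zero.2 hxy)).ne')).const_mul C).fderiv, norm_smul, norm_smul,
    Real.norm_eq_abs, Real.norm_eq_abs, abs_of_nonneg hC, abs_of_nonneg (by positivity),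
    ← mul_assoc, ← mul_assoc]
  exact mul_le_of_le_one_right (by positivity) hlip

end InnerProductSpace

section Viscosity

variable {N : ℕ}

theorem Pminus_one_le_of_norm_eq_one (φ : EuclideanSpace ℝ (Fin N) → ℝ)
    (x : EuclideanSpace ℝ (Fin N)) {e : EuclideanSpace ℝ (Fin N)} (he : ‖e‖ = 1) :
    Pminus 1 φ x ≤ iteratedFDeriv ℝ 2 φ x ![e, e] := by
  have hframe : Orthonormal ℝ fun _ : Fin 1 => e := by
    rw [orthonormal_iff_ite]
    intro i j
    simp [Subsingleton.elim i j, he]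
  refine csInf_le ⟨-‖iteratedFDeriv ℝ 2 φ x‖, ?_⟩ ⟨fun _ => e, hframe, by simp⟩
  rintro s ⟨ξ, hξ, rfl⟩
  have hbound := (iteratedFDeriv ℝ 2 φ x).le_opNorm ![ξ 0, ξ 0]
  simp only [Fin.prod_univ_two, Matrix.cons_val_zero, Matrix.cons_val_one, hξ.1 0, mul_one]
    at hbound
  simpa using neg_le_of_abs_le hbound

theorem IsViscSubsol.mono {P : (EuclideanSpace ℝ (Fin N) → ℝ) → EuclideanSpace ℝ (Fin N) → ℝ}
    {Ω D : Set (EuclideanSpace ℝ (Fin N))}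
    {H : EuclideanSpace ℝ (Fin N) → EuclideanSpace ℝ (Fin N) → ℝ} {μ : ℝ}
    {f u : EuclideanSpace ℝ (Fin N) → ℝ} (hu : IsViscSubsol P Ω H μ f u) (hD : IsOpen D)
    (hDΩ : D ⊆ Ω) : IsViscSubsol P D H μ f u :=
  fun x₀ hx₀ φ hφ hmax => hu x₀ (hDΩ hx₀) φ hφ ((hmax.isLocalMax (hD.mem_nhds hx₀)).on Ω)

theorem IsViscSubsol.le_of_frontier_le
    {P : (EuclideanSpace ℝ (Fin N) → ℝ) → EuclideanSpace ℝ (Fin N) → ℝ}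
    {Ω : Set (EuclideanSpace ℝ (Fin N))} (hΩ : Bornology.IsBounded Ω)
    {H : EuclideanSpace ℝ (Fin N) → EuclideanSpace ℝ (Fin N) → ℝ}
    {f u ψ : EuclideanSpace ℝ (Fin N) → ℝ} (hu : IsViscSubsol P Ω H 0 f u)
    (husc : UpperSemicontinuousOn u (closure Ω)) (hψ : ContinuousOn ψ (closure Ω))
    (hψ₂ : ∀ x ∈ Ω, ContDiffAt ℝ 2 ψ x)
    (hstrict : ∀ x ∈ Ω, P ψ x + H x (gradient ψ x) < f x)
    (hfrontier : ∀ x ∈ frontier Ω, u x ≤ ψ x) :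
    ∀ x ∈ closure Ω, u x ≤ ψ x := by
  intro x hx
  obtain ⟨x₀, hx₀, hmax⟩ := (husc.add hψ.neg.upperSemicontinuousOn).exists_isMaxOn ⟨x, hx⟩
    hΩ.isCompact_closure
  have hx₀Ω : x₀ ∉ Ω := fun hx₀Ω => by
    have := hu x₀ hx₀Ω ψ (hψ₂ x₀ hx₀Ω) ((hmax.on_subset subset_closure).localize)
    linarith [hstrict x₀ hx₀Ω]
  have hx₀u := hfrontier x₀ ⟨hx₀, fun h => hx₀Ω (interior_subset h)⟩
  have hxu : u x - ψ x ≤ u x₀ - ψ x₀ := hmax hx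
  linarith

theorem Pminus_one_mul_norm_sub_rpow_add_le {Ω : Set (EuclideanSpace ℝ (Fin N))}
    {H : EuclideanSpace ℝ (Fin N) → EuclideanSpace ℝ (Fin N) → ℝ} {b : ℝ} (hb : 0 ≤ b)
    (hSC1 : SC1 Ω H b) {x y : EuclideanSpace ℝ (Fin N)} (hx : x ∈ Ω) (hxy : x ≠ y) {C γ : ℝ}
    (hC : 0 ≤ C) (hγ : 0 ≤ γ) :
    Pminus 1 (fun z => C * ‖z - y‖ ^ γ) x + H x (gradient (fun z => C * ‖z - y‖ ^ γ) x) ≤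
      C * γ * ‖x - y‖ ^ (γ - 2) * (γ - 1 + b * ‖x - y‖) := by
  have hr : 0 < ‖x - y‖ := norm_pos_iff.2 (sub_ne_zero.2 hxy)
  have hP := (Pminus_one_le_of_norm_eq_one (fun z => C * ‖z - y‖ ^ γ) x
    (norm_smul_inv_norm (sub_ne_zero.2 hxy))).trans_eq
      (iteratedFDeriv_two_mul_norm_sub_rpow hxy C γ)
  have hgrad : ‖gradient (fun z => C * ‖z - y‖ ^ γ) x‖ ≤ C * γ * ‖x - y‖ ^ (γ - 1) :=
    ((InnerProductSpace.toDual ℝ _).symm.norm_map _).trans_le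
      (norm_fderiv_mul_norm_sub_rpow_le hxy hC hγ)
  have hH := (le_abs_self _).trans ((hSC1 x hx _).trans (mul_le_mul_of_nonneg_left hgrad hb))
  have hpow : ‖x - y‖ ^ (γ - 1) = ‖x - y‖ ^ (γ - 2) * ‖x - y‖ := by
    rw [← Real.rpow_add_one hr.ne']
    ring_nf
  rw [hpow] at hH
  linear_combination hP + hH

theorem Pminus_one_mul_norm_sub_rpow_add_lt {Ω : Set (EuclideanSpace ℝ (Fin N))}
    {H : EuclideanSpace ℝ (Fin N) → EuclideanSpace ℝ (Fin N) → ℝ} {b : ℝ} (hb : 0 ≤ b)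
    (hSC1 : SC1 Ω H b) {m γ r₀ C : ℝ} (hγ : γ ∈ Ioo (0 : ℝ) 1) (hbr₀ : b * r₀ ≤ (1 - γ) / 2)
    (hC : 0 ≤ C) (hmC : m < C * (γ * ((1 - γ) / 2) * r₀ ^ (γ - 2)))
    {x y : EuclideanSpace ℝ (Fin N)} (hx : x ∈ Ω) (hxy : x ≠ y) (hxr : ‖x - y‖ ≤ r₀) :
    Pminus 1 (fun z => C * ‖z - y‖ ^ γ) x + H x (gradient (fun z => C * ‖z - y‖ ^ γ) x) < -m := by
  obtain ⟨hγ0, hγ1⟩ := hγ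
  have hr : 0 < ‖x - y‖ := norm_pos_iff.2 (sub_ne_zero.2 hxy)
  calc _ ≤ C * γ * ‖x - y‖ ^ (γ - 2) * (γ - 1 + b * ‖x - y‖) :=
        Pminus_one_mul_norm_sub_rpow_add_le hb hSC1 hx hxy hC hγ0.le
    _ ≤ C * γ * ‖x - y‖ ^ (γ - 2) * -((1 - γ) / 2) := by
        gcongr
        nlinarith [mul_le_mul_of_nonneg_left hxr hb]
    _ ≤ C * γ * r₀ ^ (γ - 2) * -((1 - γ) / 2) := by
        have hpow := Real.rpow_le_rpow_of_nonpos hr hxr (show γ - 2 ≤ 0 by linarith)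
        have hK : 0 ≤ C * γ * ((1 - γ) / 2) := mul_nonneg (mul_nonneg hC hγ0.le) (by linarith)
        linear_combination mul_le_mul_of_nonneg_left hpow hK
    _ < -m := by linear_combination hmC

theorem le_mul_dist_rpow_of_mem_frontier {Ω : Set (EuclideanSpace ℝ (Fin N))}
    (hΩ : IsOpen Ω) (hΩb : Bornology.IsBounded Ω)
    {H : EuclideanSpace ℝ (Fin N) → EuclideanSpace ℝ (Fin N) → ℝ} {b : ℝ} (hb : 0 ≤ b)
    (hSC1 : SC1 Ω H b) {m : ℝ} {u : EuclideanSpace ℝ (Fin N) → ℝ}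
    (husc : UpperSemicontinuousOn u (closure Ω)) (hbdry : ∀ x ∈ frontier Ω, u x ≤ 0)
    (hsub : IsViscSubsol (Pminus 1) Ω H 0 (fun _ => -m) u) {M γ r₀ C : ℝ}
    (hγ : γ ∈ Ioo (0 : ℝ) 1) (hbr₀ : b * r₀ ≤ (1 - γ) / 2) (hC : 0 ≤ C)
    (huM : ∀ x ∈ closure Ω, u x ≤ M) (hMC : M ≤ C * r₀ ^ γ)
    (hmC : m < C * (γ * ((1 - γ) / 2) * r₀ ^ (γ - 2)))
    {y : EuclideanSpace ℝ (Fin N)} (hy : y ∈ frontier Ω) {z : EuclideanSpace ℝ (Fin N)}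
    (hz : z ∈ closure Ω) (hzy : dist z y ≤ r₀) :
    u z ≤ C * dist z y ^ γ := by
  set ψ : EuclideanSpace ℝ (Fin N) → ℝ := fun z => C * ‖z - y‖ ^ γ
  have hyΩ : y ∉ Ω := fun h => (hΩ.frontier_eq ▸ hy).2 h
  have hsphere : ∀ x ∈ closure Ω, dist x y = r₀ → u x ≤ ψ x := fun x hx hxr => by
    simp only [ψ, ← dist_eq_norm, hxr]
    exact (huM x hx).trans hMC
  set D := ball y r₀ ∩ Ω
  have hψ_strict : ∀ x ∈ D, Pminus 1 ψ x + H x (gradient ψ x) < -m := fun x hx =>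
    Pminus_one_mul_norm_sub_rpow_add_lt hb hSC1 hγ hbr₀ hC hmC hx.2
      (ne_of_mem_of_not_mem hx.2 hyΩ) (mem_ball_iff_norm.1 hx.1).le
  have hcmp := (hsub.mono (isOpen_ball.inter hΩ) inter_subset_right).le_of_frontier_le
    (hΩb.subset inter_subset_right) (husc.mono (closure_mono inter_subset_right))
    (continuous_const.mul ((continuous_id.sub continuous_const).norm.rpow_const
      fun _ => Or.inr hγ.1.le)).continuousOn
    (fun x hx => contDiffAt_mul_norm_sub_rpow (ne_of_mem_of_not_mem hx.2 hyΩ) C γ)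
    hψ_strict fun x hx => by
      have hxcl : x ∈ closure Ω := closure_mono inter_subset_right (frontier_subset_closure hx)
      rcases frontier_inter_subset _ _ hx with ⟨hxs, -⟩ | ⟨-, hxf⟩
      · exact hsphere x hxcl (frontier_ball_subset_sphere hxs)
      · exact (hbdry x hxf).trans (mul_nonneg hC (by positivity))
  rw [dist_eq_norm]
  rcases hzy.lt_or_eq with hlt | heq
  · exact hcmp z (isOpen_ball.inter_closure ⟨mem_ball.2 hlt, hz⟩)
  · exact hsphere z hz heq

theorem statement3_general {N : ℕ} (hN : 2 ≤ N)
    (Ω : Set (EuclideanSpace ℝ (Fin N))) (hΩopen : IsOpen Ω)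
    (hΩbdd : Bornology.IsBounded Ω)
    (H : EuclideanSpace ℝ (Fin N) → EuclideanSpace ℝ (Fin N) → ℝ) (b : ℝ) (hb : 0 ≤ b)
    (hSC1 : SC1 Ω H b)
    (m : ℝ)
    (u : EuclideanSpace ℝ (Fin N) → ℝ)
    (hubdd : ∃ M : ℝ, ∀ x ∈ closure Ω, |u x| ≤ M)
    (husc : UpperSemicontinuousOn u (closure Ω))
    (hbdry : ∀ x ∈ frontier Ω, u x ≤ 0)
    (hsub : IsViscSubsol (Pminus 1) Ω H 0 (fun _ => -m) u) :
    ∀ γ ∈ Ioo (0 : ℝ) 1, ∃ C : ℝ,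
      ∀ x ∈ closure Ω, u x ≤ C * infDist x (frontier Ω) ^ γ := by
  rintro γ ⟨hγ0, hγ1⟩
  obtain ⟨M, huM⟩ : ∃ M, ∀ x ∈ closure Ω, u x ≤ M :=
    hubdd.imp fun M hM x hx => (le_abs_self _).trans (hM x hx)
  set r₀ := (1 - γ) / (2 * (b + 1))
  have hr₀ : 0 < r₀ := div_pos (by linarith) (by linarith)
  have hbr₀ : b * r₀ ≤ (1 - γ) / 2 := by
    rw [mul_div_assoc', div_le_div_iff₀ (by linarith) two_pos]
    nlinarith
  obtain ⟨C, hC, hMC, hmC⟩ : ∃ C, 0 ≤ C ∧ M ≤ C * r₀ ^ γ ∧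
      m < C * (γ * ((1 - γ) / 2) * r₀ ^ (γ - 2)) :=
    ((eventually_ge_atTop 0).and
      (((tendsto_id.atTop_mul_const (by positivity)).eventually_ge_atTop M).and
        ((tendsto_id.atTop_mul_const
          (mul_pos (mul_pos hγ0 (by linarith)) (by positivity))).eventually_gt_atTop m))).exists
  refine ⟨C, fun x hx => ?_⟩
  obtain rfl | hΩne := Ω.eq_empty_or_nonempty
  · simp at hx
  have : Nonempty (Fin N) := ⟨⟨0, by omega⟩⟩
  have hfr : (frontier Ω).Nonempty :=
    nonempty_frontier_iff.2 ⟨hΩne, fun h => NormedSpace.unbounded_univ ℝ _ (h ▸ hΩbdd)⟩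
  obtain ⟨y, hy, hxy⟩ := (isCompact_of_isClosed_isBounded isClosed_frontier
    (hΩbdd.closure.subset frontier_subset_closure)).exists_infDist_eq_dist hfr x
  rw [hxy]
  rcases le_or_gt (dist x y) r₀ with hnear | hfar
  · exact le_mul_dist_rpow_of_mem_frontier hΩopen hΩbdd hb hSC1 husc hbdry hsub ⟨hγ0, hγ1⟩ hbr₀
      hC huM hMC hmC hy hx hnear
  · calc u x ≤ C * r₀ ^ γ := (huM x hx).trans hMC
      _ ≤ C * dist x y ^ γ := by gcongr

/-- Hölder-type upper barrier: a bounded subsolution of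
`𝒫⁻₁(D²u) + H(x,∇u) = -m` which is `≤ 0` on `∂Ω` satisfies `u ≤ C d^γ` for every
`γ ∈ (0,1)`. -/
theorem statement3 {N : ℕ} (hN : 2 ≤ N)
    (Ω : Set (EuclideanSpace ℝ (Fin N))) (hΩopen : IsOpen Ω)
    (hΩbdd : Bornology.IsBounded Ω)
    (H : EuclideanSpace ℝ (Fin N) → EuclideanSpace ℝ (Fin N) → ℝ) (b : ℝ) (hb : 0 ≤ b)
    (hHcont : ContinuousOn (Function.uncurry H)
      (Ω ×ˢ (univ : Set (EuclideanSpace ℝ (Fin N)))))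
    (hSC1 : SC1 Ω H b)
    (m : ℝ) (hm : 0 < m)
    (u : EuclideanSpace ℝ (Fin N) → ℝ)
    (hubdd : ∃ M : ℝ, ∀ x ∈ closure Ω, |u x| ≤ M)
    (husc : UpperSemicontinuousOn u (closure Ω))
    (hbdry : ∀ x ∈ frontier Ω, u x ≤ 0)
    (hsub : IsViscSubsol (Pminus 1) Ω H 0 (fun _ => -m) u) :
    ∀ γ ∈ Ioo (0 : ℝ) 1, ∃ C : ℝ,
      ∀ x ∈ closure Ω, u x ≤ C * infDist x (frontier Ω) ^ γ :=
  statement3_general hN Ω hΩopen hΩbdd H b hb hSC1 m u hubdd husc hbdry hsub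
end Viscosity
end

section
/- Let N ≥ 2, 1 ≤ k < N, R > 0, and let Ω ∈ 𝒞_R. Let H : Ω × ℝ^N → ℝ be continuous and satisfy (SC1) with constant b, assume bR < k, and let m > 0. Suppose u : cl(Ω) → ℝ is upper semicontinuous, satisfies u ≤ 0 on ∂Ω, and is a viscosity subsolution of 𝒫⁺ₖ(D²u) + H(x,∇u) = −m in Ω (that is, 𝒫⁺ₖ(D²u) + H(x,∇u) ≥ −m in the viscosity sense). Then u(x) ≤ (2mR/(k − bR)) d(x) for all x ∈ cl(Ω). -/
open Metric Filter Topology Set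

/-!
For every ball `B_R(y)` containing `Ω`, the concave paraboloid `ψ(z) = c (R² - |z - y|²)` with
`c = m / (k - bR)` has Hessian `-2c I`, so `𝒫⁺ₖ(D²ψ) + H(z, ∇ψ) ≤ -2ck + 2bcR = -2m < -m` in `Ω`:
`ψ` is a strict classical supersolution, and it is nonnegative on `∂Ω`. At a maximum point of `u - ψ`
on the compact set `cl Ω` the subsolution inequality therefore cannot hold in `Ω`, so the maximum is
attained on `∂Ω` and `u ≤ ψ ≤ 2cR (R - |x - y|)`. Since `Ω` is the intersection of these balls, every
boundary point is at distance almost `R` from some centre `y`, and `R - |x - y|` is then at most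
`d(x)` up to an arbitrarily small error.
-/

section Paraboloid

variable {E : Type*} [NormedAddCommGroup E]

def paraboloid (c R : ℝ) (y z : E) : ℝ := c * (R ^ 2 - ‖z - y‖ ^ 2)

variable {c R : ℝ} {x y : E}

lemma paraboloid_nonneg (hc : 0 ≤ c) (hx : dist x y ≤ R) : 0 ≤ paraboloid c R y x := by
  rw [paraboloid, ← dist_eq_norm]
  have := dist_nonneg.trans hx
  have : dist x y ^ 2 ≤ R ^ 2 := by gcongr
  exact mul_nonneg hc (by linarith)

lemma paraboloid_le_mul_sub_dist (hc : 0 ≤ c) (hx : dist x y ≤ R) :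
    paraboloid c R y x ≤ 2 * c * R * (R - dist x y) := by
  rw [paraboloid, ← dist_eq_norm]
  have := dist_nonneg (x := x) (y := y)
  have : 0 ≤ c * (R - dist x y) := mul_nonneg hc (by linarith)
  nlinarith

variable [InnerProductSpace ℝ E] (c R y)

lemma contDiff_paraboloid : ContDiff ℝ 2 (paraboloid c R y) :=
  contDiff_const.mul (contDiff_const.sub ((contDiff_id.sub contDiff_const).norm_sq ℝ))

lemma hasFDerivAt_paraboloid (x : E) :
    HasFDerivAt (paraboloid c R y) ((-(2 * c)) • innerSL ℝ (x - y)) x := by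
  have h := (((hasFDerivAt_id x).sub_const y).norm_sq.const_sub (R ^ 2)).const_mul c
  refine h.congr_fderiv ?_
  ext v
  simp
  ring

lemma fderiv_paraboloid :
    fderiv ℝ (paraboloid c R y) = fun x => ((-(2 * c)) • innerSL ℝ) (x - y) :=
  funext fun x => (hasFDerivAt_paraboloid c R y x).fderiv

lemma iteratedFDeriv_two_paraboloid (x ξ : E) :
    iteratedFDeriv ℝ 2 (paraboloid c R y) x ![ξ, ξ] = -(2 * c) * ‖ξ‖ ^ 2 := by
  have h : HasFDerivAt (fun x => ((-(2 * c)) • innerSL ℝ) (x - y))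
      ((-(2 * c)) • innerSL ℝ (E := E)) x :=
    ((-(2 * c)) • innerSL ℝ (E := E)).hasFDerivAt.comp x ((hasFDerivAt_id x).sub_const y)
  rw [iteratedFDeriv_two_apply, fderiv_paraboloid, h.fderiv]
  simp only [Matrix.cons_val_zero, Matrix.cons_val_one, Matrix.cons_val_fin_one,
    FunLike.coe_smul, Pi.smul_apply, smul_eq_mul]
  rw [innerSL_apply_apply, real_inner_self_eq_norm_sq]

lemma gradient_paraboloid [CompleteSpace E] (x : E) :
    gradient (paraboloid c R y) x = (-(2 * c)) • (x - y) := by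
  refine HasGradientAt.gradient ?_
  rw [hasGradientAt_iff_hasFDerivAt]
  refine (hasFDerivAt_paraboloid c R y x).congr_fderiv ?_
  ext v
  simp

end Paraboloid

lemma Pplus_eq_of_iteratedFDeriv_two_eq {N k : ℕ} (hk : k ≤ N)
    {φ : EuclideanSpace ℝ (Fin N) → ℝ} {x : EuclideanSpace ℝ (Fin N)} {a : ℝ}
    (h : ∀ ξ, iteratedFDeriv ℝ 2 φ x ![ξ, ξ] = a * ‖ξ‖ ^ 2) :
    Pplus k φ x = k * a := by
  have hframe : ∀ ξ : Fin k → EuclideanSpace ℝ (Fin N), Orthonormal ℝ ξ →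
      ∑ i, iteratedFDeriv ℝ 2 φ x ![ξ i, ξ i] = k * a := fun ξ hξ => by
    simp [h, hξ.1]
  have hset : {s : ℝ | ∃ ξ : Fin k → EuclideanSpace ℝ (Fin N), Orthonormal ℝ ξ ∧
      s = ∑ i, iteratedFDeriv ℝ 2 φ x ![ξ i, ξ i]} = {(k : ℝ) * a} := by
    ext s
    constructor
    · rintro ⟨ξ, hξ, rfl⟩
      exact hframe ξ hξ
    · rintro rfl
      have hξ := (EuclideanSpace.basisFun (Fin N) ℝ).orthonormal.comp _ (Fin.castLE_injective hk)
      exact ⟨_, hξ, (hframe _ hξ).symm⟩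
  rw [Pplus, hset, csSup_singleton]

theorem IsViscSubsol.le_of_strictSupersolution {N : ℕ}
    {P : (EuclideanSpace ℝ (Fin N) → ℝ) → EuclideanSpace ℝ (Fin N) → ℝ}
    {Ω : Set (EuclideanSpace ℝ (Fin N))}
    {H : EuclideanSpace ℝ (Fin N) → EuclideanSpace ℝ (Fin N) → ℝ}
    {f u φ : EuclideanSpace ℝ (Fin N) → ℝ} (hsub : IsViscSubsol P Ω H 0 f u)
    (hΩ : IsCompact (closure Ω)) (hu : UpperSemicontinuousOn u (closure Ω))
    (hφ : ContDiff ℝ 2 φ) (hstrict : ∀ x ∈ Ω, P φ x + H x (gradient φ x) < f x)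
    (hbdry : ∀ x ∈ frontier Ω, u x ≤ φ x) :
    ∀ x ∈ closure Ω, u x ≤ φ x := by
  intro x hx
  obtain ⟨x₀, hx₀, hmax⟩ := UpperSemicontinuousOn.exists_isMaxOn ⟨x, hx⟩ hΩ
    (hu.add (hφ.continuous.neg.continuousOn.upperSemicontinuousOn))
  have hx₀_le : u x₀ ≤ φ x₀ := by
    by_cases hx₀Ω : x₀ ∈ Ω
    · have hloc : IsLocalMaxOn (fun z => u z - φ z) Ω x₀ :=
        (hmax.on_subset subset_closure).localize
      have := hsub x₀ hx₀Ω φ hφ.contDiffAt hloc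
      linarith [hstrict x₀ hx₀Ω]
    · exact hbdry x₀ ⟨hx₀, fun h => hx₀Ω (interior_subset h)⟩
  have hle : u x + -φ x ≤ u x₀ + -φ x₀ := hmax hx
  linarith

lemma Pplus_paraboloid_add_lt {N k : ℕ} (hk : k ≤ N)
    {h : EuclideanSpace ℝ (Fin N) → ℝ} {b R m : ℝ} (hb : 0 ≤ b)
    (hh : ∀ ξ, |h ξ| ≤ b * ‖ξ‖) (hbR : b * R < k) (hm : 0 < m)
    {x y : EuclideanSpace ℝ (Fin N)} (hx : dist x y ≤ R) :
    Pplus k (paraboloid (m / (k - b * R)) R y) x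
      + h (gradient (paraboloid (m / (k - b * R)) R y) x) < -m := by
  set c := m / (k - b * R)
  have hc : 0 < c := div_pos hm (by linarith)
  have hgrad : ‖gradient (paraboloid c R y) x‖ ≤ 2 * c * R := by
    rw [gradient_paraboloid, norm_smul, norm_neg, Real.norm_of_nonneg (by positivity),
      ← dist_eq_norm]
    gcongr
  have hP : Pplus k (paraboloid c R y) x = k * -(2 * c) :=
    Pplus_eq_of_iteratedFDeriv_two_eq hk (iteratedFDeriv_two_paraboloid c R y x)
  have hH : h (gradient (paraboloid c R y) x) ≤ b * (2 * c * R) :=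
    (le_abs_self _).trans ((hh _).trans (by gcongr))
  have hck : c * (k - b * R) = m := div_mul_cancel₀ m (by linarith)
  linarith

lemma le_paraboloid_of_subset_ball {N k : ℕ} (hk : k ≤ N)
    {Ω : Set (EuclideanSpace ℝ (Fin N))}
    {H : EuclideanSpace ℝ (Fin N) → EuclideanSpace ℝ (Fin N) → ℝ} {b R m : ℝ} (hb : 0 ≤ b)
    (hSC1 : SC1 Ω H b) (hbR : b * R < k) (hm : 0 < m) {u : EuclideanSpace ℝ (Fin N) → ℝ}
    (hu : UpperSemicontinuousOn u (closure Ω)) (hbdry : ∀ x ∈ frontier Ω, u x ≤ 0)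
    (hsub : IsViscSubsol (Pplus k) Ω H 0 (fun _ => -m) u)
    {y : EuclideanSpace ℝ (Fin N)} (hΩ : Ω ⊆ ball y R) :
    ∀ x ∈ closure Ω, u x ≤ paraboloid (m / (k - b * R)) R y x := by
  have hcl : closure Ω ⊆ closedBall y R :=
    (closure_mono hΩ).trans closure_ball_subset_closedBall
  refine hsub.le_of_strictSupersolution
    ((isCompact_closedBall y R).of_isClosed_subset isClosed_closure hcl) hu
    (contDiff_paraboloid _ _ _)
    (fun x hx => Pplus_paraboloid_add_lt hk hb (hSC1 x hx) hbR hm (mem_ball.1 (hΩ hx)).le)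
    (fun x hx => (hbdry x hx).trans (paraboloid_nonneg ?_ (hcl hx.1)))
  exact div_nonneg hm.le (by linarith)

lemma le_of_forall_pos_le_add_mul {a b C : ℝ} (hC : 0 ≤ C) (h : ∀ ε > 0, a ≤ b + C * ε) :
    a ≤ b := by
  refine le_of_forall_pos_le_add fun ε hε => (h (ε / (C + 1)) (by positivity)).trans ?_
  have : C * (ε / (C + 1)) ≤ ε := by
    rw [mul_div_assoc', div_le_iff₀ (by positivity)]
    nlinarith
  linarith

section HulaHoop

variable {X : Type*} [PseudoMetricSpace X] {Y : Set X} {R : ℝ}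

lemma exists_lt_dist_add_of_notMem_interior {z : X} (hz : z ∉ interior (⋂ y ∈ Y, ball y R))
    {ε : ℝ} (hε : 0 < ε) : ∃ y ∈ Y, R < dist z y + ε := by
  by_contra! h
  refine hz (mem_interior_iff_mem_nhds.2 (ball_mem_nhds z hε |> mem_of_superset <| ?_))
  intro w hw
  refine mem_iInter₂.2 fun y hy => mem_ball.2 ?_
  calc dist w y ≤ dist w z + dist z y := dist_triangle _ _ _
    _ < ε + (R - ε) := by linarith [mem_ball.1 hw, h y hy]
    _ = R := by ring

lemma le_mul_infDist_frontier_biInter_ball {x : X} {a C : ℝ} (hC : 0 ≤ C)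
    (ha : ∀ y ∈ Y, a ≤ C * (R - dist x y))
    (hne : (frontier (⋂ y ∈ Y, ball y R)).Nonempty) :
    a ≤ C * infDist x (frontier (⋂ y ∈ Y, ball y R)) := by
  have hdist : ∀ z ∈ frontier (⋂ y ∈ Y, ball y R), a ≤ C * dist x z := by
    intro z hz
    refine le_of_forall_pos_le_add_mul hC fun ε hε => ?_
    obtain ⟨y, hy, hzy⟩ := exists_lt_dist_add_of_notMem_interior hz.2 hε
    calc a ≤ C * (R - dist x y) := ha y hy
      _ ≤ C * (dist x z + ε) := by gcongr; linarith [dist_triangle z x y, dist_comm x z]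
      _ = C * dist x z + C * ε := by ring
  refine le_of_forall_pos_le_add_mul hC fun ε hε => ?_
  obtain ⟨z, hz, hxz⟩ := (infDist_lt_iff hne).1 (lt_add_of_pos_right _ hε)
  calc a ≤ C * dist x z := hdist z hz
    _ ≤ C * (infDist x _ + ε) := by gcongr
    _ = C * infDist x _ + C * ε := by ring

end HulaHoop

theorem statement4_general {N : ℕ} (k : ℕ) (hkN : k < N)
    (R : ℝ)
    (Ω : Set (EuclideanSpace ℝ (Fin N))) (hΩ : HulaHoop R Ω)
    (H : EuclideanSpace ℝ (Fin N) → EuclideanSpace ℝ (Fin N) → ℝ) (b : ℝ) (hb : 0 ≤ b)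
    (hSC1 : SC1 Ω H b) (hbR : b * R < (k : ℝ))
    (m : ℝ) (hm : 0 < m)
    (u : EuclideanSpace ℝ (Fin N) → ℝ)
    (husc : UpperSemicontinuousOn u (closure Ω))
    (hbdry : ∀ x ∈ frontier Ω, u x ≤ 0)
    (hsub : IsViscSubsol (Pplus k) Ω H 0 (fun _ => -m) u) :
    ∀ x ∈ closure Ω,
      u x ≤ (2 * m * R / ((k : ℝ) - b * R)) * infDist x (frontier Ω) := by
  obtain ⟨Y, ⟨y₀, hy₀⟩, rfl⟩ := hΩ
  intro x hx
  set c := m / (k - b * R)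
  have hc : 0 ≤ c := div_nonneg hm.le (by linarith)
  have hΩ_ball : ∀ y ∈ Y, (⋂ y ∈ Y, ball y R) ⊆ ball y R := fun y hy => biInter_subset_of_mem hy
  have hdist : ∀ y ∈ Y, dist x y ≤ R := fun y hy =>
    closure_ball_subset_closedBall (closure_mono (hΩ_ball y hy) hx)
  have hbound : ∀ y ∈ Y, u x ≤ 2 * c * R * (R - dist x y) := fun y hy =>
    (le_paraboloid_of_subset_ball hkN.le hb hSC1 hbR hm husc hbdry hsub (hΩ_ball y hy) x hx).trans
      (paraboloid_le_mul_sub_dist hc (hdist y hy))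
  have : Nontrivial (EuclideanSpace ℝ (Fin N)) := by
    have : Nonempty (Fin N) := ⟨⟨0, by omega⟩⟩
    infer_instance
  have hfr : (frontier (⋂ y ∈ Y, ball y R)).Nonempty :=
    nonempty_frontier_iff.2 ⟨closure_nonempty_iff.1 ⟨x, hx⟩, fun h =>
      NormedSpace.unbounded_univ ℝ _ (h ▸ isBounded_ball.subset (hΩ_ball y₀ hy₀))⟩
  have hR : 0 ≤ R := dist_nonneg.trans (hdist y₀ hy₀)
  rw [show 2 * m * R / (k - b * R) = 2 * c * R by ring]
  exact le_mul_infDist_frontier_biInter_ball (by positivity) hbound hfr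

/-- linear upper barrier in hula hoop domains: if `Ω ∈ 𝒞_R`, `bR < k`, and
`u` is a subsolution of `𝒫⁺ₖ(D²u) + H(x,∇u) = -m` with `u ≤ 0` on `∂Ω`, then
`u(x) ≤ (2mR/(k - bR)) d(x)`. -/
theorem statement4 {N : ℕ} (hN : 2 ≤ N) (k : ℕ) (hk1 : 1 ≤ k) (hkN : k < N)
    (R : ℝ) (hR : 0 < R)
    (Ω : Set (EuclideanSpace ℝ (Fin N))) (hΩ : HulaHoop R Ω)
    (H : EuclideanSpace ℝ (Fin N) → EuclideanSpace ℝ (Fin N) → ℝ) (b : ℝ) (hb : 0 ≤ b)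
    (hHcont : ContinuousOn (Function.uncurry H)
      (Ω ×ˢ (univ : Set (EuclideanSpace ℝ (Fin N)))))
    (hSC1 : SC1 Ω H b) (hbR : b * R < (k : ℝ))
    (m : ℝ) (hm : 0 < m)
    (u : EuclideanSpace ℝ (Fin N) → ℝ)
    (husc : UpperSemicontinuousOn u (closure Ω))
    (hbdry : ∀ x ∈ frontier Ω, u x ≤ 0)
    (hsub : IsViscSubsol (Pplus k) Ω H 0 (fun _ => -m) u) :
    ∀ x ∈ closure Ω,
      u x ≤ (2 * m * R / ((k : ℝ) - b * R)) * infDist x (frontier Ω) :=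
  statement4_general k hkN R Ω hΩ H b hb hSC1 hbR m hm u husc hbdry hsub
end

section
/- Let N ≥ 2, R > 0, let Ω ∈ 𝒞_R, let H : Ω × ℝ^N → ℝ be continuous and satisfy (SC1) with constant b, assume bR < 1, and let f : Ω → ℝ be continuous and bounded. If u ∈ C(cl(Ω)) is a viscosity solution of 𝒫⁻₁(D²u) + H(x,∇u) = f(x) in Ω with u = 0 on ∂Ω, then u is Lipschitz continuous on cl(Ω), with Lipschitz constant bounded by a constant depending only on Ω, b, sup|u| and sup|f|. The same conclusion holds for viscosity solutions of 𝒫⁺₁(D²u) + H(x,∇u) = f(x) in Ω with u = 0 on ∂Ω. -/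
/-!
Every point of `∂Ω` lies on a sphere `∂B_R(y)` with `Ω ⊆ B_R(y)`. The paraboloid
`-(B/2)(R² - ‖x - y‖²)` is a strict subsolution as soon as `B(1 - bR) > sup |f|`, so it lies below
the supersolution `u`, which gives `u z ≥ -BR‖x - z‖` for `x ∈ ∂Ω`.

In the interior one doubles variables and maximises `u x - u z - W(‖x - z‖)` over `cl Ω × cl Ω`,
with the concave profile `W(r) = a(1 - e^{-cr})`, `c = b + 1`. At a maximum with `x ∈ Ω` the test
function `W(‖· - z‖)` has second derivative `-ac²e^{-cr}` in the direction `x - z`, so `𝒫⁻₁` of its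
Hessian is at most that, and the subsolution inequality fails once `ac e^{-2cR} > sup |f|`; at a
maximum with `x ∈ ∂Ω` the boundary estimate applies once `ac e^{-2cR} ≥ BR`. Hence
`u x - u z ≤ W(‖x - z‖) ≤ ac‖x - z‖`.

Since `-𝒫⁺₁(-X) = 𝒫⁻₁(X)`, the `𝒫⁺₁` equation for `u` is a `𝒫⁻₁` equation for `-u`.
-/

open Metric Filter Topology Set

open scoped RealInnerProductSpace Pointwise

section RadialCalculus

variable {E : Type*} [NormedAddCommGroup E] [InnerProductSpace ℝ E]

lemma hasFDerivAt_comp_normSq_sub {g : ℝ → ℝ} {g' : ℝ} {z x : E}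
    (hg : HasDerivAt g g' (‖x - z‖ ^ 2)) :
    HasFDerivAt (fun y => g (‖y - z‖ ^ 2)) ((2 * g') • innerSL ℝ (x - z)) x := by
  have h := hg.comp_hasFDerivAt x ((hasFDerivAt_id x).sub_const z).norm_sq
  refine h.congr_fderiv ?_
  ext v
  simp only [smul_apply, ContinuousLinearMap.comp_apply, innerSL_apply_apply,
    ContinuousLinearMap.coe_id', id_eq, smul_eq_mul, nsmul_eq_mul, Nat.cast_ofNat]
  ring

lemma iteratedFDeriv_two_comp_normSq_sub {g g₁ : ℝ → ℝ} {g₂ : ℝ} {z x : E}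
    (hg : ∀ᶠ s in 𝓝 (‖x - z‖ ^ 2), HasDerivAt g (g₁ s) s)
    (hg₁ : HasDerivAt g₁ g₂ (‖x - z‖ ^ 2)) (v w : E) :
    iteratedFDeriv ℝ 2 (fun y => g (‖y - z‖ ^ 2)) x ![v, w] =
      2 * g₁ (‖x - z‖ ^ 2) * ⟪v, w⟫ + 4 * g₂ * (⟪x - z, v⟫ * ⟪x - z, w⟫) := by
  have hq : Continuous fun y : E => ‖y - z‖ ^ 2 := by fun_prop
  have hfderiv : fderiv ℝ (fun y => g (‖y - z‖ ^ 2)) =ᶠ[𝓝 x]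
      fun y => (2 * g₁ (‖y - z‖ ^ 2)) • innerSL ℝ (y - z) :=
    (hq.continuousAt.eventually hg).mono fun y hy => (hasFDerivAt_comp_normSq_sub hy).fderiv
  have hcoef := (hasFDerivAt_comp_normSq_sub hg₁).const_mul 2
  have hinner : HasFDerivAt (fun y : E => innerSL ℝ (y - z)) (innerSL ℝ) x :=
    (innerSL ℝ).hasFDerivAt.comp x ((hasFDerivAt_id x).sub_const z)
  have hprod : HasFDerivAt (fun y => (2 * g₁ (‖y - z‖ ^ 2)) • innerSL ℝ (y - z)) _ x :=
    hcoef.smul hinner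
  rw [iteratedFDeriv_two_apply, hfderiv.fderiv_eq, hprod.fderiv]
  simp only [Matrix.cons_val_zero, Matrix.cons_val_one, add_apply,
    smul_apply, ContinuousLinearMap.smulRight_apply, innerSL_apply_apply,
    smul_eq_mul]
  rw [show innerSL ℝ v w = ⟪v, w⟫ from rfl]
  ring

lemma iteratedFDeriv_two_quadratic (a γ : ℝ) (z x v w : E) :
    iteratedFDeriv ℝ 2 (fun y => a + γ * ‖y - z‖ ^ 2) x ![v, w] = 2 * γ * ⟪v, w⟫ := by
  have hg : ∀ s, HasDerivAt (fun s => a + γ * s) γ s := fun s => by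
    simpa using ((hasDerivAt_id s).const_mul γ).const_add a
  simpa using iteratedFDeriv_two_comp_normSq_sub (Eventually.of_forall hg)
    (hasDerivAt_const _ γ) v w

lemma norm_fderiv_quadratic (a γ : ℝ) (z x : E) :
    ‖fderiv ℝ (fun y => a + γ * ‖y - z‖ ^ 2) x‖ = 2 * |γ| * ‖x - z‖ := by
  have hg : HasDerivAt (fun s => a + γ * s) γ (‖x - z‖ ^ 2) := by
    simpa using ((hasDerivAt_id _).const_mul γ).const_add a
  rw [(hasFDerivAt_comp_normSq_sub hg).fderiv, norm_smul, innerSL_apply_norm, Real.norm_eq_abs,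
    abs_mul, abs_two]

lemma hasDerivAt_comp_sqrt {W W₁ : ℝ → ℝ} {s : ℝ} (hs : 0 < s)
    (hW : HasDerivAt W (W₁ √s) √s) :
    HasDerivAt (fun s => W √s) (W₁ √s / (2 * √s)) s :=
  (hW.comp s (Real.hasDerivAt_sqrt hs.ne')).congr_deriv (mul_one_div _ _)

omit [InnerProductSpace ℝ E] in
lemma comp_norm_sub_eq_comp_sqrt (W : ℝ → ℝ) (z : E) :
    (fun y => W ‖y - z‖) = fun y => W √(‖y - z‖ ^ 2) := by
  simp only [Real.sqrt_sq (norm_nonneg _)]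

lemma iteratedFDeriv_two_comp_norm_sub {W W₁ : ℝ → ℝ} {W₂ : ℝ} {z x : E} (hxz : x ≠ z)
    (hW : ∀ᶠ r in 𝓝 ‖x - z‖, HasDerivAt W (W₁ r) r) (hW₁ : HasDerivAt W₁ W₂ ‖x - z‖) :
    iteratedFDeriv ℝ 2 (fun y => W ‖y - z‖) x
      ![‖x - z‖⁻¹ • (x - z), ‖x - z‖⁻¹ • (x - z)] = W₂ := by
  have hr : 0 < ‖x - z‖ := norm_pos_iff.2 (sub_ne_zero.2 hxz)
  have hsqrt : √(‖x - z‖ ^ 2) = ‖x - z‖ := Real.sqrt_sq hr.le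
  have hnear : ∀ᶠ s in 𝓝 (‖x - z‖ ^ 2), 0 < s ∧ HasDerivAt W (W₁ √s) √s := by
    have hcont : ContinuousAt Real.sqrt (‖x - z‖ ^ 2) := Real.continuous_sqrt.continuousAt
    rw [← hsqrt] at hW
    exact (eventually_gt_nhds (by positivity)).and (hcont.eventually hW)
  have hg := hnear.mono fun s hs => hasDerivAt_comp_sqrt hs.1 hs.2
  have hg₁ : HasDerivAt (fun s => W₁ √s / (2 * √s)) _ (‖x - z‖ ^ 2) :=
    (hasDerivAt_comp_sqrt (W₁ := fun _ => W₂) (by positivity) (by rwa [hsqrt])).div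
      ((Real.hasDerivAt_sqrt (by positivity)).const_mul 2) (by positivity)
  rw [comp_norm_sub_eq_comp_sqrt, iteratedFDeriv_two_comp_normSq_sub hg hg₁]
  simp only [real_inner_smul_right, real_inner_self_eq_norm_sq, hsqrt,
    norm_smul, norm_inv, norm_norm]
  field_simp
  ring

lemma norm_fderiv_comp_norm_sub {W W₁ : ℝ → ℝ} {z x : E} (hxz : x ≠ z)
    (hW : HasDerivAt W (W₁ ‖x - z‖) ‖x - z‖) :
    ‖fderiv ℝ (fun y => W ‖y - z‖) x‖ = |W₁ ‖x - z‖| := by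
  have hr : 0 < ‖x - z‖ := norm_pos_iff.2 (sub_ne_zero.2 hxz)
  have hsqrt : √(‖x - z‖ ^ 2) = ‖x - z‖ := Real.sqrt_sq hr.le
  rw [← hsqrt] at hW
  have hφ := hasFDerivAt_comp_normSq_sub (hasDerivAt_comp_sqrt (by positivity) hW)
  rw [comp_norm_sub_eq_comp_sqrt, hφ.fderiv, norm_smul, innerSL_apply_norm, hsqrt, Real.norm_eq_abs,
    abs_mul, abs_div, abs_mul, abs_two, abs_of_pos hr]
  field_simp

section Gradient

variable [CompleteSpace E]

lemma norm_gradient_eq_norm_fderiv (φ : E → ℝ) (x : E) : ‖gradient φ x‖ = ‖fderiv ℝ φ x‖ :=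
  (InnerProductSpace.toDual ℝ E).symm.norm_map _

lemma gradient_fun_neg (φ : E → ℝ) (x : E) :
    gradient (fun y => -φ y) x = -gradient φ x := by
  rw [gradient, gradient, fderiv_fun_neg, map_neg]

end Gradient

end RadialCalculus

section Pucci

variable {N : ℕ} {φ : EuclideanSpace ℝ (Fin N) → ℝ} {x : EuclideanSpace ℝ (Fin N)}

lemma setOf_sum_orthonormal_one_eq_image_sphere :
    {s : ℝ | ∃ ξ : Fin 1 → EuclideanSpace ℝ (Fin N), Orthonormal ℝ ξ ∧
      s = ∑ i, iteratedFDeriv ℝ 2 φ x ![ξ i, ξ i]} =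
      (fun v => iteratedFDeriv ℝ 2 φ x ![v, v]) '' sphere 0 1 := by
  ext s
  constructor
  · rintro ⟨ξ, hξ, rfl⟩
    exact ⟨ξ 0, by simpa using hξ.1 0, by simp⟩
  · rintro ⟨v, hv, rfl⟩
    refine ⟨fun _ => v, ⟨fun _ => by simpa using hv, Subsingleton.pairwise⟩, by simp⟩

lemma Pminus_one_eq :
    Pminus 1 φ x = sInf ((fun v => iteratedFDeriv ℝ 2 φ x ![v, v]) '' sphere 0 1) := by
  rw [Pminus, setOf_sum_orthonormal_one_eq_image_sphere]

lemma Pplus_one_eq :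
    Pplus 1 φ x = sSup ((fun v => iteratedFDeriv ℝ 2 φ x ![v, v]) '' sphere 0 1) := by
  rw [Pplus, setOf_sum_orthonormal_one_eq_image_sphere]

lemma Pminus_one_le {v : EuclideanSpace ℝ (Fin N)} (hv : ‖v‖ = 1) :
    Pminus 1 φ x ≤ iteratedFDeriv ℝ 2 φ x ![v, v] := by
  rw [Pminus_one_eq]
  have hcont : Continuous fun v => iteratedFDeriv ℝ 2 φ x ![v, v] := by fun_prop
  exact csInf_le ((isCompact_sphere 0 1).image hcont).bddBelow ⟨v, by simpa using hv, rfl⟩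

lemma le_Pminus_one [NeZero N] {t : ℝ}
    (ht : ∀ v, ‖v‖ = 1 → t ≤ iteratedFDeriv ℝ 2 φ x ![v, v]) : t ≤ Pminus 1 φ x := by
  have hne : (sphere (0 : EuclideanSpace ℝ (Fin N)) 1).Nonempty :=
    NormedSpace.sphere_nonempty.2 zero_le_one
  rw [Pminus_one_eq]
  exact le_csInf (hne.image _) (by rintro _ ⟨v, hv, rfl⟩; exact ht v (by simpa using hv))

lemma Pplus_one_neg :
    Pplus 1 (fun y => -φ y) x = -Pminus 1 φ x := by
  rw [Pplus_one_eq, Pminus_one_eq, ← Real.sSup_neg, ← Set.image_neg_eq_neg, Set.image_image]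
  congr 2
  ext v
  simp [← Pi.neg_def, iteratedFDeriv_neg_apply]

lemma le_Pminus_one_quadratic [NeZero N] (a γ : ℝ) (z x : EuclideanSpace ℝ (Fin N)) :
    2 * γ ≤ Pminus 1 (fun y => a + γ * ‖y - z‖ ^ 2) x :=
  le_Pminus_one fun v hv => by
    rw [iteratedFDeriv_two_quadratic, real_inner_self_eq_norm_sq, hv, one_pow, mul_one]

end Pucci

section Duality

variable {N : ℕ} {P : (EuclideanSpace ℝ (Fin N) → ℝ) → EuclideanSpace ℝ (Fin N) → ℝ}
  {Ω : Set (EuclideanSpace ℝ (Fin N))}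
  {H : EuclideanSpace ℝ (Fin N) → EuclideanSpace ℝ (Fin N) → ℝ} {μ : ℝ}
  {f u : EuclideanSpace ℝ (Fin N) → ℝ}

lemma IsViscSupersol.neg (h : IsViscSupersol P Ω H μ f u) :
    IsViscSubsol (fun φ x => -P (fun y => -φ y) x) Ω (fun x ξ => -H x (-ξ)) μ
      (fun x => -f x) (fun x => -u x) := by
  intro x₀ hx₀ φ hφ hmax
  have hmin : IsLocalMinOn (fun x => u x - -φ x) Ω x₀ := by
    simpa only [neg_sub, sub_neg_eq_add, add_comm] using hmax.neg
  have := h x₀ hx₀ (fun y => -φ y) hφ.neg hmin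
  rw [gradient_fun_neg] at this
  linarith

lemma IsViscSubsol.neg (h : IsViscSubsol P Ω H μ f u) :
    IsViscSupersol (fun φ x => -P (fun y => -φ y) x) Ω (fun x ξ => -H x (-ξ)) μ
      (fun x => -f x) (fun x => -u x) := by
  intro x₀ hx₀ φ hφ hmin
  have hmax : IsLocalMaxOn (fun x => u x - -φ x) Ω x₀ := by
    simpa only [neg_sub, sub_neg_eq_add, add_comm] using hmin.neg
  have := h x₀ hx₀ (fun y => -φ y) hφ.neg hmax
  rw [gradient_fun_neg] at this
  linarith

lemma SC1.neg {b : ℝ} (h : SC1 Ω H b) : SC1 Ω (fun x ξ => -H x (-ξ)) b := by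
  intro x hx ξ
  simpa using h x hx (-ξ)

lemma neg_Pplus_one_neg :
    (fun φ x => -Pplus 1 (fun y => -φ y) x) =
      (Pminus 1 : (EuclideanSpace ℝ (Fin N) → ℝ) → _) := by
  funext φ x
  simp only [Pplus_one_neg, neg_neg]

end Duality

section ExpModulus

open Real

noncomputable def expModulus (a c r : ℝ) : ℝ := a * (1 - exp (-(c * r)))

lemma contDiff_expModulus (a c : ℝ) : ContDiff ℝ 2 (expModulus a c) := by
  unfold expModulus
  fun_prop

lemma hasDerivAt_expModulus (a c r : ℝ) :
    HasDerivAt (expModulus a c) (a * c * exp (-(c * r))) r := by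
  have h : HasDerivAt (fun r => -(c * r)) (-c) r := by
    simpa using (hasDerivAt_id r).const_mul (-c)
  exact ((h.exp.const_sub 1).const_mul a).congr_deriv (by ring)

lemma hasDerivAt_deriv_expModulus (a c r : ℝ) :
    HasDerivAt (fun r => a * c * exp (-(c * r))) (-(a * c ^ 2 * exp (-(c * r)))) r := by
  have h : HasDerivAt (fun r => -(c * r)) (-c) r := by
    simpa using (hasDerivAt_id r).const_mul (-c)
  exact (h.exp.const_mul (a * c)).congr_deriv (by ring)

lemma expModulus_le {a : ℝ} (ha : 0 ≤ a) (c r : ℝ) : expModulus a c r ≤ a * c * r := by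
  have := add_one_le_exp (-(c * r))
  unfold expModulus
  nlinarith

lemma mul_le_expModulus {a c r D : ℝ} (ha : 0 ≤ a) (hc : 0 ≤ c) (hr : 0 ≤ r) (hrD : r ≤ D) :
    a * c * exp (-(c * D)) * r ≤ expModulus a c r := by
  have hmono : exp (-(c * D)) ≤ exp (-(c * r)) := exp_le_exp.2 (by nlinarith)
  have hconcave : exp (-(c * r)) * (c * r) ≤ 1 - exp (-(c * r)) := by
    have h1 := add_one_le_exp (c * r)
    have h2 : exp (-(c * r)) * exp (c * r) = 1 := by rw [← exp_add]; simp
    nlinarith [exp_pos (-(c * r))]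
  unfold expModulus
  nlinarith [mul_le_mul_of_nonneg_right hmono (mul_nonneg hc hr)]

end ExpModulus

lemma sq_sub_sq_norm_sub_le {E : Type*} [SeminormedAddCommGroup E] {x y z : E} {R : ℝ}
    (hz : ‖z - y‖ ≤ R) (hx : R ≤ ‖x - y‖) : R ^ 2 - ‖z - y‖ ^ 2 ≤ 2 * R * ‖x - z‖ := by
  have h := norm_sub_norm_le (x - y) (z - y)
  rw [sub_sub_sub_cancel_right] at h
  nlinarith [norm_nonneg (z - y)]

lemma closure_biInter_ball_subset_closedBall {E : Type*} [PseudoMetricSpace E] {Y : Set E}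
    {R : ℝ} {y : E} (hy : y ∈ Y) : closure (⋂ y ∈ Y, ball y R) ⊆ closedBall y R :=
  (closure_mono (biInter_subset_of_mem hy)).trans closure_ball_subset_closedBall

section Viscosity

variable {N : ℕ} {Ω : Set (EuclideanSpace ℝ (Fin N))}
  {H : EuclideanSpace ℝ (Fin N) → EuclideanSpace ℝ (Fin N) → ℝ} {b : ℝ}
  {f u : EuclideanSpace ℝ (Fin N) → ℝ}

lemma IsViscSubsol.not_isLocalMaxOn_sub_expModulus (hsub : IsViscSubsol (Pminus 1) Ω H 0 f u)
    (hSC1 : SC1 Ω H b) {M a c : ℝ} (hf : ∀ x ∈ Ω, -M ≤ f x) {x z : EuclideanSpace ℝ (Fin N)}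
    (hx : x ∈ Ω) (hxz : x ≠ z) (hac : 0 ≤ a * c)
    (hM : M < a * c * (c - b) * Real.exp (-(c * ‖x - z‖))) :
    ¬ IsLocalMaxOn (fun y => u y - expModulus a c ‖y - z‖) Ω x := by
  intro hmax
  have hxz' : x - z ≠ 0 := sub_ne_zero.2 hxz
  have hC2 : ContDiffAt ℝ 2 (fun y => expModulus a c ‖y - z‖) x :=
    (contDiff_expModulus a c).contDiffAt.comp x
      ((contDiffAt_norm ℝ hxz').comp x (contDiffAt_id.sub contDiffAt_const))
  have hvisc := hsub x hx _ hC2 hmax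
  have hP : Pminus 1 (fun y => expModulus a c ‖y - z‖) x ≤
      -(a * c ^ 2 * Real.exp (-(c * ‖x - z‖))) :=
    (Pminus_one_le (norm_smul_inv_norm hxz')).trans_eq
      (iteratedFDeriv_two_comp_norm_sub hxz
        (Eventually.of_forall (hasDerivAt_expModulus a c)) (hasDerivAt_deriv_expModulus a c _))
  have hH : H x (gradient (fun y => expModulus a c ‖y - z‖) x) ≤
      b * (a * c * Real.exp (-(c * ‖x - z‖))) := by
    refine (le_abs_self _).trans ((hSC1 x hx _).trans_eq ?_)
    rw [norm_gradient_eq_norm_fderiv,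
      norm_fderiv_comp_norm_sub (W₁ := fun r => a * c * Real.exp (-(c * r))) hxz
        (hasDerivAt_expModulus a c _), abs_of_nonneg (by positivity)]
  nlinarith [hf x hx]

lemma IsViscSupersol.neg_quadratic_le
    {P : (EuclideanSpace ℝ (Fin N) → ℝ) → EuclideanSpace ℝ (Fin N) → ℝ}
    (hP : ∀ a γ z x, 2 * γ ≤ P (fun y => a + γ * ‖y - z‖ ^ 2) x)
    (hsup : IsViscSupersol P Ω H 0 f u) (hSC1 : SC1 Ω H b) (hb : 0 ≤ b) {M B R : ℝ}
    (hf : ∀ x ∈ Ω, f x ≤ M) (hB : 0 ≤ B) (hMB : M + b * B * R < B)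
    (hcomp : IsCompact (closure Ω)) (hu : ContinuousOn u (closure Ω))
    (hbdry : ∀ x ∈ closure Ω \ Ω, 0 ≤ u x) {y : EuclideanSpace ℝ (Fin N)}
    (hy : closure Ω ⊆ closedBall y R) {v : EuclideanSpace ℝ (Fin N)} (hv : v ∈ closure Ω) :
    -(B / 2 * (R ^ 2 - ‖v - y‖ ^ 2)) ≤ u v := by
  set φ : EuclideanSpace ℝ (Fin N) → ℝ := fun w => -(B / 2 * R ^ 2) + B / 2 * ‖w - y‖ ^ 2
  have hφ : ∀ w, φ w = -(B / 2 * (R ^ 2 - ‖w - y‖ ^ 2)) := fun w => by ring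
  have hyR : ∀ w ∈ closure Ω, ‖w - y‖ ≤ R := fun w hw => by
    simpa [dist_eq_norm] using hy hw
  have hφC2 : ContDiff ℝ 2 φ := contDiff_const.add
    (contDiff_const.mul ((contDiff_norm_sq ℝ).comp (contDiff_id.sub contDiff_const)))
  obtain ⟨x₀, hx₀, hmin⟩ := hcomp.exists_isMinOn ⟨v, hv⟩ (hu.sub hφC2.continuous.continuousOn)
  suffices 0 ≤ u x₀ - φ x₀ by
    have hminv : u x₀ - φ x₀ ≤ u v - φ v := isMinOn_iff.1 hmin v hv
    linarith [hφ v]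
  by_cases hx₀Ω : x₀ ∈ Ω
  · exfalso
    have hvisc := hsup x₀ hx₀Ω φ hφC2.contDiffAt (hmin.on_subset subset_closure).localize
    have hPφ : 2 * (B / 2) ≤ P φ x₀ := hP _ _ y x₀
    have hgrad : ‖gradient φ x₀‖ ≤ B * R := by
      rw [norm_gradient_eq_norm_fderiv, norm_fderiv_quadratic, abs_of_nonneg (by positivity)]
      nlinarith [hyR x₀ hx₀]
    have hH := neg_le_of_abs_le (hSC1 x₀ hx₀Ω (gradient φ x₀))
    nlinarith [hf x₀ hx₀Ω]
  · have hR2 : ‖x₀ - y‖ ^ 2 ≤ R ^ 2 := pow_le_pow_left₀ (norm_nonneg _) (hyR x₀ hx₀) 2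
    have := hbdry x₀ ⟨hx₀, hx₀Ω⟩
    nlinarith [hφ x₀]

lemma IsViscSupersol.neg_mul_norm_sub_le_of_biInter_ball [NeZero N]
    (hsup : IsViscSupersol (Pminus 1) Ω H 0 f u) (hSC1 : SC1 Ω H b) (hb : 0 ≤ b)
    {Y : Set (EuclideanSpace ℝ (Fin N))} {M B R : ℝ} (hΩ : Ω = ⋂ y ∈ Y, ball y R)
    (hf : ∀ x ∈ Ω, f x ≤ M) (hB : 0 ≤ B) (hMB : M + b * B * R < B)
    (hcomp : IsCompact (closure Ω)) (hu : ContinuousOn u (closure Ω))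
    (hzero : ∀ x ∈ closure Ω \ Ω, u x = 0) {x z : EuclideanSpace ℝ (Fin N)}
    (hx : x ∈ closure Ω \ Ω) (hz : z ∈ closure Ω) : -(B * R * ‖x - z‖) ≤ u z := by
  obtain ⟨y, hy, hxy⟩ : ∃ y ∈ Y, R ≤ ‖x - y‖ := by
    simpa [hΩ, dist_eq_norm] using hx.2
  have hball : closure Ω ⊆ closedBall y R := hΩ ▸ closure_biInter_ball_subset_closedBall hy
  have hbarrier := hsup.neg_quadratic_le le_Pminus_one_quadratic hSC1 hb hf hB hMB hcomp hu
    (fun x hx => (hzero x hx).ge) hball hz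
  have hgeo := sq_sub_sq_norm_sub_le (by simpa [dist_eq_norm] using hball hz) hxy
  nlinarith

lemma IsViscSubsol.sub_le_expModulus (hsub : IsViscSubsol (Pminus 1) Ω H 0 f u)
    (hSC1 : SC1 Ω H b) {M L D a c : ℝ} (hf : ∀ x ∈ Ω, -M ≤ f x)
    (hcomp : IsCompact (closure Ω)) (hu : ContinuousOn u (closure Ω))
    (hzero : ∀ x ∈ closure Ω \ Ω, u x = 0)
    (hbdry : ∀ x ∈ closure Ω \ Ω, ∀ z ∈ closure Ω, -(L * ‖x - z‖) ≤ u z)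
    (hdiam : ∀ x ∈ closure Ω, ∀ z ∈ closure Ω, ‖x - z‖ ≤ D)
    (ha : 0 ≤ a) (hc : 0 ≤ c) (hbc : b ≤ c) (hM : M < a * c * (c - b) * Real.exp (-(c * D)))
    (hL : L ≤ a * c * Real.exp (-(c * D))) {x z : EuclideanSpace ℝ (Fin N)}
    (hx : x ∈ closure Ω) (hz : z ∈ closure Ω) :
    u x - u z ≤ expModulus a c ‖x - z‖ := by
  set Φ : EuclideanSpace ℝ (Fin N) × EuclideanSpace ℝ (Fin N) → ℝ :=
    fun m => u m.1 - u m.2 - expModulus a c ‖m.1 - m.2‖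
  have hW : Continuous fun m : EuclideanSpace ℝ (Fin N) × EuclideanSpace ℝ (Fin N) =>
      expModulus a c ‖m.1 - m.2‖ :=
    (contDiff_expModulus a c).continuous.comp (continuous_fst.sub continuous_snd).norm
  have hΦ : ContinuousOn Φ (closure Ω ×ˢ closure Ω) :=
    ((hu.comp continuousOn_fst fun m hm => hm.1).sub
      (hu.comp continuousOn_snd fun m hm => hm.2)).sub hW.continuousOn
  obtain ⟨⟨p, q⟩, ⟨hp, hq⟩, hmax⟩ := (hcomp.prod hcomp).exists_isMaxOn ⟨(x, z), hx, hz⟩ hΦ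
  suffices Φ (p, q) ≤ 0 by
    have : Φ (x, z) ≤ Φ (p, q) := isMaxOn_iff.1 hmax (x, z) ⟨hx, hz⟩
    simp only [Φ] at this
    linarith
  by_cases hpq : p = q
  · simp [Φ, hpq, expModulus]
  have hr : ‖p - q‖ ≤ D := hdiam p hp q hq
  have hexp : Real.exp (-(c * D)) ≤ Real.exp (-(c * ‖p - q‖)) :=
    Real.exp_le_exp.2 (by nlinarith)
  by_cases hpΩ : p ∈ Ω
  · refine absurd ?_ (hsub.not_isLocalMaxOn_sub_expModulus hSC1 hf hpΩ hpq (mul_nonneg ha hc)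
      (hM.trans_le (mul_le_mul_of_nonneg_left hexp
        (mul_nonneg (mul_nonneg ha hc) (sub_nonneg.2 hbc)))))
    refine IsMaxOn.localize (isMaxOn_iff.2 fun y hy => ?_)
    have := isMaxOn_iff.1 hmax (y, q) ⟨subset_closure hy, hq⟩
    simp only [Φ] at this
    linarith
  · have hW := mul_le_expModulus ha hc (norm_nonneg _) hr
    have := hbdry p ⟨hp, hpΩ⟩ q hq
    simp only [Φ, hzero p ⟨hp, hpΩ⟩]
    nlinarith [norm_nonneg (p - q)]

end Viscosity

theorem exists_lipschitzOnWith_of_Pminus {N : ℕ} [NeZero N] {R : ℝ} (hR : 0 < R)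
    {Ω : Set (EuclideanSpace ℝ (Fin N))} (hΩ : HulaHoop R Ω)
    {H : EuclideanSpace ℝ (Fin N) → EuclideanSpace ℝ (Fin N) → ℝ} {b : ℝ} (hb : 0 ≤ b)
    (hSC1 : SC1 Ω H b) (hbR : b * R < 1) {f : EuclideanSpace ℝ (Fin N) → ℝ}
    (hfb : ∃ M : ℝ, ∀ x ∈ Ω, |f x| ≤ M) {u : EuclideanSpace ℝ (Fin N) → ℝ}
    (hu : ContinuousOn u (closure Ω)) (hzero : ∀ x ∈ closure Ω \ Ω, u x = 0)
    (hsub : IsViscSubsol (Pminus 1) Ω H 0 f u) (hsup : IsViscSupersol (Pminus 1) Ω H 0 f u) :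
    ∃ L : NNReal, LipschitzOnWith L u (closure Ω) := by
  obtain ⟨Y, ⟨y₀, hy₀⟩, hΩY⟩ := hΩ
  obtain ⟨M, hM⟩ := hfb
  have hball : closure Ω ⊆ closedBall y₀ R := hΩY ▸ closure_biInter_ball_subset_closedBall hy₀
  have hcomp := (isCompact_closedBall y₀ R).of_isClosed_subset isClosed_closure hball
  have hdiam : ∀ x ∈ closure Ω, ∀ z ∈ closure Ω, ‖x - z‖ ≤ 2 * R := fun x hx z hz => by
    rw [← dist_eq_norm]
    linarith [dist_triangle_right x z y₀, mem_closedBall.1 (hball hx), mem_closedBall.1 (hball hz)]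
  set B := (max M 0 + 1) / (1 - b * R)
  have hB : 0 < B := div_pos (by positivity) (by linarith)
  have hMB : M + b * B * R < B := by
    have : B * (1 - b * R) = max M 0 + 1 := div_mul_cancel₀ _ (by linarith)
    nlinarith [le_max_left M 0]
  have hbdry : ∀ x ∈ closure Ω \ Ω, ∀ z ∈ closure Ω, -(B * R * ‖x - z‖) ≤ u z :=
    fun x hx z hz => hsup.neg_mul_norm_sub_le_of_biInter_ball hSC1 hb hΩY
      (fun x hx => (le_abs_self _).trans (hM x hx)) hB.le hMB hcomp hu hzero hx hz
  set c := b + 1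
  set a := (max M 0 + B * R + 1) * Real.exp (c * (2 * R)) / c
  have hc : 0 < c := by positivity
  have hac : a * c * Real.exp (-(c * (2 * R))) = max M 0 + B * R + 1 := by
    simp only [a, Real.exp_neg]
    field_simp
  have hkey x (hx : x ∈ closure Ω) z (hz : z ∈ closure Ω) :=
    hsub.sub_le_expModulus (a := a) (c := c) hSC1 (fun x hx => neg_le_of_abs_le (hM x hx)) hcomp
      hu hzero hbdry hdiam (by positivity) hc.le (by linarith)
      (by rw [show c - b = 1 by ring, mul_one, hac]; linarith [le_max_left M 0, mul_pos hB hR])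
      (by rw [hac]; linarith [le_max_right M 0]) hx hz
  refine ⟨(a * c).toNNReal, LipschitzOnWith.of_le_add_mul' _ fun x hx z hz => ?_⟩
  have := expModulus_le (by positivity : 0 ≤ a) c ‖x - z‖
  rw [dist_eq_norm]
  linarith [hkey x hx z hz]

theorem statement5_general {N : ℕ} (hN : 2 ≤ N) (R : ℝ) (hR : 0 < R)
    (Ω : Set (EuclideanSpace ℝ (Fin N))) (hΩ : HulaHoop R Ω)
    (H : EuclideanSpace ℝ (Fin N) → EuclideanSpace ℝ (Fin N) → ℝ) (b : ℝ) (hb : 0 ≤ b)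
    (hSC1 : SC1 Ω H b) (hbR : b * R < 1)
    (f : EuclideanSpace ℝ (Fin N) → ℝ)
    (hfb : ∃ M : ℝ, ∀ x ∈ Ω, |f x| ≤ M)
    (u : EuclideanSpace ℝ (Fin N) → ℝ)
    (huc : ContinuousOn u (closure Ω))
    (hbdry : ∀ x ∈ frontier Ω, u x = 0)
    (hsol : (IsViscSubsol (Pminus 1) Ω H 0 f u ∧ IsViscSupersol (Pminus 1) Ω H 0 f u) ∨
            (IsViscSubsol (Pplus 1) Ω H 0 f u ∧ IsViscSupersol (Pplus 1) Ω H 0 f u)) :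
    ∃ L : NNReal, LipschitzOnWith L u (closure Ω) := by
  have : NeZero N := ⟨by omega⟩
  have hzero : ∀ x ∈ closure Ω \ Ω, u x = 0 := fun x hx =>
    hbdry x ⟨hx.1, fun hint => hx.2 (interior_subset hint)⟩
  rcases hsol with ⟨hsub, hsup⟩ | ⟨hsub, hsup⟩
  · exact exists_lipschitzOnWith_of_Pminus hR hΩ hb hSC1 hbR hfb huc hzero hsub hsup
  · obtain ⟨M, hM⟩ := hfb
    obtain ⟨L, hL⟩ := exists_lipschitzOnWith_of_Pminus hR hΩ hb hSC1.neg hbR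
      ⟨M, fun x hx => (abs_neg (f x)).trans_le (hM x hx)⟩ huc.neg
      (fun x hx => neg_eq_zero.2 (hzero x hx)) (neg_Pplus_one_neg ▸ hsup.neg)
      (neg_Pplus_one_neg ▸ hsub.neg)
    exact ⟨L, hL.of_neg⟩

/-- global Lipschitz regularity for viscosity solutions of
`𝒫⁻₁(D²u) + H(x,∇u) = f` (or `𝒫⁺₁(D²u) + H(x,∇u) = f`) vanishing on the boundary
of a hula hoop domain `Ω ∈ 𝒞_R` with `bR < 1`. -/
theorem statement5 {N : ℕ} (hN : 2 ≤ N) (R : ℝ) (hR : 0 < R)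
    (Ω : Set (EuclideanSpace ℝ (Fin N))) (hΩ : HulaHoop R Ω)
    (H : EuclideanSpace ℝ (Fin N) → EuclideanSpace ℝ (Fin N) → ℝ) (b : ℝ) (hb : 0 ≤ b)
    (hHcont : ContinuousOn (Function.uncurry H)
      (Ω ×ˢ (univ : Set (EuclideanSpace ℝ (Fin N)))))
    (hSC1 : SC1 Ω H b) (hbR : b * R < 1)
    (f : EuclideanSpace ℝ (Fin N) → ℝ)
    (hfc : ContinuousOn f Ω) (hfb : ∃ M : ℝ, ∀ x ∈ Ω, |f x| ≤ M)
    (u : EuclideanSpace ℝ (Fin N) → ℝ)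
    (huc : ContinuousOn u (closure Ω))
    (hbdry : ∀ x ∈ frontier Ω, u x = 0)
    (hsol : (IsViscSubsol (Pminus 1) Ω H 0 f u ∧ IsViscSupersol (Pminus 1) Ω H 0 f u) ∨
            (IsViscSubsol (Pplus 1) Ω H 0 f u ∧ IsViscSupersol (Pplus 1) Ω H 0 f u)) :
    ∃ L : NNReal, LipschitzOnWith L u (closure Ω) :=
  statement5_general hN R hR Ω hΩ H b hb hSC1 hbR f hfb u huc hbdry hsol
end
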